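/- arXiv:2507.13562 — 9 statements merged into one kernel-verified Lean document; each statement's English description precedes it below -/
import Mathlib

section
/- Let q : (0,1) → ℝ be a continuous, strictly increasing, integrable function, m = ∫_0^1 q(u) du, θ > 0, and define ES(p) = (1−p)^{-1} ∫_p^1 q(u) du and FES_θ(p) = ((1−p)·ES(p) + θ·m)/(1−p+θ). If p* ∈ (0,1) satisfies FES_θ(p*) = q(p*), then p* is the unique maximizer of FES_θ on (0,1): FES_θ(p) ≤ FES_θ(p*) for every p ∈ (0,1), with strict inequality whenever p ≠ p*. -/
open MeasureTheory Set

/-- If `q` is a continuous, strictly increasing, integrable quantile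
function on (0,1), `m = ∫_0^1 q`, `θ > 0`,
`FES p = ((1-p)·((1-p)⁻¹ ∫_p^1 q) + θ·m)/(1-p+θ)`, and `p* ∈ (0,1)` satisfies
`FES p* = q p*`, then `p*` is the unique maximizer of `FES` on (0,1). -/
theorem fes_unique_maximizer
    (q : ℝ → ℝ)
    (hq_cont : ContinuousOn q (Set.Ioo 0 1))
    (hq_mono : StrictMonoOn q (Set.Ioo 0 1))
    (hq_int : IntervalIntegrable q volume 0 1)
    (m θ : ℝ) (hm : m = ∫ u in (0:ℝ)..1, q u) (hθ : 0 < θ)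
    (FES : ℝ → ℝ)
    (hFES : ∀ p ∈ Set.Ioo (0:ℝ) 1,
      FES p = ((1 - p) * ((1 - p)⁻¹ * ∫ u in p..1, q u) + θ * m) / (1 - p + θ))
    (pstar : ℝ) (hps : pstar ∈ Set.Ioo (0:ℝ) 1)
    (heq : FES pstar = q pstar) :
    ∀ p ∈ Set.Ioo (0:ℝ) 1, FES p ≤ FES pstar ∧ (p ≠ pstar → FES p < FES pstar) := by
  obtain ⟨hps0, hps1⟩ := hps
  -- integrability on any subinterval of [0,1]
  have hsub : ∀ a b : ℝ, a ∈ Set.Icc (0:ℝ) 1 → b ∈ Set.Icc (0:ℝ) 1 →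
      IntervalIntegrable q volume a b := by
    intro a b ha hb
    refine hq_int.mono_set (Set.uIcc_subset_uIcc ?_ ?_) <;>
      rw [Set.uIcc_of_le zero_le_one]
    · exact ha
    · exact hb
  -- key strict inequality
  have key : ∀ p ∈ Set.Ioo (0:ℝ) 1, p ≠ pstar →
      (∫ u in p..pstar, q u) < q pstar * (pstar - p) := by
    rintro p ⟨hp0, hp1⟩ hne
    rcases lt_or_gt_of_ne hne with hlt | hgt
    · -- p < pstar
      set c := (p + pstar) / 2 with hc
      have hpc : p < c := by simp only [hc]; linarith
      have hcps : c < pstar := by simp only [hc]; linarith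
      have hcI : c ∈ Set.Ioo (0:ℝ) 1 := ⟨by linarith, by linarith⟩
      have hi1 := hsub p c ⟨hp0.le, hp1.le⟩ ⟨hcI.1.le, hcI.2.le⟩
      have hi2 := hsub c pstar ⟨hcI.1.le, hcI.2.le⟩ ⟨hps0.le, hps1.le⟩
      have h1 : (∫ u in p..c, q u) ≤ (c - p) * q c := by
        have := intervalIntegral.integral_mono_on hpc.le hi1
          intervalIntegrable_const
          (fun u hu => hq_mono.monotoneOn ⟨lt_of_lt_of_le hp0 hu.1, lt_of_le_of_lt hu.2 hcI.2⟩
            hcI hu.2)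
        simpa using this
      have h2 : (∫ u in c..pstar, q u) ≤ (pstar - c) * q pstar := by
        have := intervalIntegral.integral_mono_on hcps.le hi2
          intervalIntegrable_const
          (fun u hu => hq_mono.monotoneOn ⟨lt_of_lt_of_le hcI.1 hu.1, lt_of_le_of_lt hu.2 hps1⟩
            ⟨hps0, hps1⟩ hu.2)
        simpa using this
      have hsplit : (∫ u in p..c, q u) + (∫ u in c..pstar, q u) = ∫ u in p..pstar, q u :=
        intervalIntegral.integral_add_adjacent_intervals hi1 hi2
      have hqc : q c < q pstar := hq_mono hcI ⟨hps0, hps1⟩ hcps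
      have hmul : (c - p) * q c < (c - p) * q pstar :=
        mul_lt_mul_of_pos_left hqc (by linarith)
      have hring : (c - p) * q pstar + (pstar - c) * q pstar = q pstar * (pstar - p) := by ring
      linarith
    · -- pstar < p
      set c := (pstar + p) / 2 with hc
      have hpsc : pstar < c := by simp only [hc]; linarith
      have hcp : c < p := by simp only [hc]; linarith
      have hcI : c ∈ Set.Ioo (0:ℝ) 1 := ⟨by linarith, by linarith⟩
      have hi1 := hsub pstar c ⟨hps0.le, hps1.le⟩ ⟨hcI.1.le, hcI.2.le⟩
      have hi2 := hsub c p ⟨hcI.1.le, hcI.2.le⟩ ⟨hp0.le, hp1.le⟩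
      have h1 : (c - pstar) * q pstar ≤ (∫ u in pstar..c, q u) := by
        have := intervalIntegral.integral_mono_on hpsc.le intervalIntegrable_const hi1
          (fun u hu => hq_mono.monotoneOn ⟨hps0, hps1⟩
            ⟨lt_of_lt_of_le hps0 hu.1, lt_of_le_of_lt hu.2 hcI.2⟩ hu.1)
        simpa using this
      have h2 : (p - c) * q c ≤ (∫ u in c..p, q u) := by
        have := intervalIntegral.integral_mono_on hcp.le intervalIntegrable_const hi2
          (fun u hu => hq_mono.monotoneOn hcI
            ⟨lt_of_lt_of_le hcI.1 hu.1, lt_of_le_of_lt hu.2 hp1⟩ hu.1)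
        simpa using this
      have hsplit : (∫ u in pstar..c, q u) + (∫ u in c..p, q u) = ∫ u in pstar..p, q u :=
        intervalIntegral.integral_add_adjacent_intervals hi1 hi2
      have hqc : q pstar < q c := hq_mono ⟨hps0, hps1⟩ hcI hpsc
      have hmul : (p - c) * q pstar < (p - c) * q c :=
        mul_lt_mul_of_pos_left hqc (by linarith)
      have hsym : (∫ u in p..pstar, q u) = -(∫ u in pstar..p, q u) :=
        intervalIntegral.integral_symm pstar p
      have hring : (c - pstar) * q pstar + (p - c) * q pstar = q pstar * (p - pstar) := by ring
      have : q pstar * (p - pstar) < ∫ u in pstar..p, q u := by linarith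
      have hring2 : q pstar * (pstar - p) = -(q pstar * (p - pstar)) := by ring
      linarith
  -- rewrite FES
  have hDs : (0:ℝ) < 1 - pstar + θ := by linarith
  have h1ps : (1:ℝ) - pstar ≠ 0 := by linarith
  have hFps : FES pstar = ((∫ u in pstar..1, q u) + θ * m) / (1 - pstar + θ) := by
    rw [hFES pstar ⟨hps0, hps1⟩, mul_inv_cancel_left₀ h1ps]
  have hstar : (∫ u in pstar..1, q u) + θ * m = q pstar * (1 - pstar + θ) := by
    have h := heq
    rw [hFps, div_eq_iff hDs.ne'] at h
    exact h
  rintro p ⟨hp0, hp1⟩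
  rcases eq_or_ne p pstar with rfl | hne
  · exact ⟨le_refl _, fun h => absurd rfl h⟩
  · have hD : (0:ℝ) < 1 - p + θ := by linarith
    have h1p : (1:ℝ) - p ≠ 0 := by linarith
    have hFp : FES p = ((∫ u in p..1, q u) + θ * m) / (1 - p + θ) := by
      rw [hFES p ⟨hp0, hp1⟩, mul_inv_cancel_left₀ h1p]
    have hsplit : (∫ u in p..pstar, q u) + (∫ u in pstar..1, q u) = ∫ u in p..1, q u :=
      intervalIntegral.integral_add_adjacent_intervals
        (hsub p pstar ⟨hp0.le, hp1.le⟩ ⟨hps0.le, hps1.le⟩)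
        (hsub pstar 1 ⟨hps0.le, hps1.le⟩ ⟨zero_le_one, le_refl _⟩)
    have hk := key p ⟨hp0, hp1⟩ hne
    have hring : q pstar * (pstar - p) + q pstar * (1 - pstar + θ) = q pstar * (1 - p + θ) := by
      ring
    have hlt : (∫ u in p..1, q u) + θ * m < q pstar * (1 - p + θ) := by linarith
    have hfin : FES p < FES pstar := by
      rw [hFp, heq, div_lt_iff₀ hD]
      exact hlt
    exact ⟨hfin.le, fun _ => hfin⟩
end

section
/- Let X be an integrable real random variable with continuous cumulative distribution function F, let p ∈ (0,1), and set VaR_p(X) = inf{x : F(x) ≥ p} and VaR_u(X) analogously for u ∈ (0,1). Then ∫_p^1 VaR_u(X) du − (1−p)·VaR_p(X) = E[(X − VaR_p(X))₊] = ∫_{VaR_p(X)}^∞ (1 − F(x)) dx; equivalently, (1−p)(ES_p(X) − VaR_p(X)) equals the stop-loss transform E[(X − VaR_p(X))₊]. -/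
/-!
Write `t = VaR_p`. The quantile function is a Galois inverse of the cdf on `(0,1)`:
`VaR_u ≤ x ↔ u ≤ F x`. Hence it pushes the uniform law on `(0,1)` forward to the law of `X`,
and since `VaR_u ≤ t` for `u ≤ p` and `VaR_u ≥ t` for `u ≥ p`,
`∫_p^1 (VaR_u - t) du = ∫_0^1 (VaR_u - t)₊ du = E[(X - t)₊]`.
The tail formula `E[(X - t)₊] = ∫_t^∞ (1 - F)` is the layer cake formula.
-/

open MeasureTheory Set Filter ProbabilityTheory

lemma Real.volume_Ioo_zero_one_inter_Iic {c : ℝ} (hc : c ≤ 1) :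
    volume (Ioo 0 1 ∩ Iic c) = ENNReal.ofReal c := by
  refine le_antisymm ?_ ?_
  · calc volume (Ioo 0 1 ∩ Iic c) ≤ volume (Ioc 0 c) := measure_mono fun y hy => ⟨hy.1.1, hy.2⟩
      _ = ENNReal.ofReal c := by simp
  · calc ENNReal.ofReal c = volume (Ioo 0 c) := by simp
      _ ≤ volume (Ioo 0 1 ∩ Iic c) :=
          measure_mono fun y hy => ⟨⟨hy.1, hy.2.trans_le hc⟩, hy.2.le⟩

namespace ProbabilityTheory

/-- Outside `(0,1)` the defining set is empty or unbounded below, and `sInf` returns the junk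
value `0`. -/
noncomputable def quantile (ν : Measure ℝ) (u : ℝ) : ℝ := sInf {x | u ≤ cdf ν x}

variable {ν : Measure ℝ} {u p x : ℝ}

lemma bddBelow_setOf_le_cdf (hu : 0 < u) : BddBelow {x | u ≤ cdf ν x} := by
  obtain ⟨x₀, hx₀⟩ :=
    ((tendsto_cdf_atBot ν).eventually (eventually_lt_nhds hu)).exists_forall_of_atBot
  exact ⟨x₀, fun y hy => not_lt.mp fun hlt => (hx₀ y hlt.le).not_ge hy⟩

lemma nonempty_setOf_le_cdf (hu : u < 1) : {x | u ≤ cdf ν x}.Nonempty :=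
  ((tendsto_cdf_atTop ν).eventually (eventually_ge_nhds hu)).exists

-- Right continuity of the cdf makes the infimum defining the quantile a minimum.
lemma le_cdf_quantile (hu : u ∈ Ioo 0 1) : u ≤ cdf ν (quantile ν u) := by
  refine ge_of_tendsto ((cdf ν).right_continuous _ |>.mono Ioi_subset_Ici_self)
    (eventually_nhdsWithin_of_forall fun y hy => ?_)
  obtain ⟨z, hz, hzy⟩ := exists_lt_of_csInf_lt (nonempty_setOf_le_cdf hu.2) hy
  exact hz.trans (monotone_cdf ν hzy.le)

lemma quantile_le_iff (hu : u ∈ Ioo 0 1) : quantile ν u ≤ x ↔ u ≤ cdf ν x :=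
  ⟨fun h => (le_cdf_quantile hu).trans (monotone_cdf ν h),
    fun h => csInf_le (bddBelow_setOf_le_cdf hu.1) h⟩

lemma monotoneOn_quantile : MonotoneOn (quantile ν) (Ioo 0 1) := fun _ hu _ hv huv =>
  (quantile_le_iff hu).2 (huv.trans (le_cdf_quantile hv))

lemma aemeasurable_quantile : AEMeasurable (quantile ν) (volume.restrict (Ioo 0 1)) :=
  aemeasurable_restrict_of_monotoneOn measurableSet_Ioo monotoneOn_quantile

variable [IsProbabilityMeasure ν]

theorem map_quantile_volume_Ioo : (volume.restrict (Ioo 0 1)).map (quantile ν) = ν := by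
  refine (Measure.ext_of_Iic ν _ fun x => ?_).symm
  have hpre : Ioo 0 1 ∩ quantile ν ⁻¹' Iic x = Ioo 0 1 ∩ Iic (cdf ν x) := by
    ext u
    simp only [mem_inter_iff, mem_preimage, mem_Iic]
    exact and_congr_right quantile_le_iff
  rw [Measure.map_apply_of_aemeasurable aemeasurable_quantile measurableSet_Iic,
    Measure.restrict_apply' measurableSet_Ioo, inter_comm, hpre,
    Real.volume_Ioo_zero_one_inter_Iic (cdf_le_one ν x), ofReal_cdf]

lemma measureReal_Ioi_eq_one_sub_cdf (x : ℝ) : ν.real (Ioi x) = 1 - cdf ν x := by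
  rw [← compl_Iic, probReal_compl_eq_one_sub measurableSet_Iic, cdf_eq_real]

theorem integral_max_sub_eq_integral_Ioi_one_sub_cdf (hν : Integrable id ν) (t : ℝ) :
    ∫ x, max (x - t) 0 ∂ν = ∫ x in Ioi t, (1 - cdf ν x) := by
  have hint : Integrable (fun x => max (x - t) 0) ν := (hν.sub (integrable_const t)).pos_part
  have hlevel : ∀ s ∈ Ioi (0 : ℝ), ν.real {x | s < max (x - t) 0} = 1 - cdf ν (s + t) := by
    intro s hs
    have : {x | s < max (x - t) 0} = Ioi (s + t) := by
      ext x
      change s < max (x - t) 0 ↔ s + t < x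
      rw [lt_max_iff, or_iff_left (not_lt.mpr (le_of_lt hs)), lt_sub_iff_add_lt]
    rw [this, measureReal_Ioi_eq_one_sub_cdf]
  have hshift := (measurePreserving_add_right volume t).setIntegral_preimage_emb
    (measurableEmbedding_addRight t) (fun x => 1 - cdf ν x) (Ioi t)
  rw [preimage_add_const_Ioi, sub_self] at hshift
  rw [hint.integral_eq_integral_meas_lt (Eventually.of_forall fun x => le_max_right _ _),
    setIntegral_congr_fun measurableSet_Ioi hlevel, hshift]

theorem intervalIntegral_quantile_sub_eq_integral_max_sub (hν : Integrable id ν)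
    (hp : p ∈ Ioo 0 1) :
    (∫ u in p..1, quantile ν u) - (1 - p) * quantile ν p = ∫ x, max (x - quantile ν p) 0 ∂ν := by
  set t := quantile ν p
  set f : ℝ → ℝ := fun x => max (x - t) 0
  have hf : Continuous f := by fun_prop
  have hpush : ∫ x, f x ∂ν = ∫ u in Ioo 0 1, f (quantile ν u) := by
    conv_lhs => rw [← map_quantile_volume_Ioo (ν := ν)]
    exact integral_map aemeasurable_quantile hf.aestronglyMeasurable
  have hint : IntegrableOn (f ∘ quantile ν) (Ioo 0 1) := by
    rw [IntegrableOn, ← integrable_map_measure hf.aestronglyMeasurable aemeasurable_quantile,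
      map_quantile_volume_Ioo]
    exact (hν.sub (integrable_const t)).pos_part
  have hsub : Ioo p 1 ⊆ Ioo 0 1 := Ioo_subset_Ioo_left hp.1.le
  have hzero : ∀ u ∈ Ioo 0 1 \ Ioo p 1, f (quantile ν u) = 0 := by
    rintro u ⟨hu, hup⟩
    have : u ≤ p := not_lt.mp fun h => hup ⟨h, hu.2⟩
    exact max_eq_right (sub_nonpos.mpr (monotoneOn_quantile hu hp this))
  have hpos : EqOn (fun u => f (quantile ν u)) (fun u => quantile ν u - t) (Ioo p 1) :=
    fun u hu => max_eq_left (sub_nonneg.mpr (monotoneOn_quantile hp (hsub hu) hu.1.le))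
  have hint_sub : IntegrableOn (fun u => quantile ν u - t) (Ioo p 1) :=
    (hint.mono_set hsub).congr_fun hpos measurableSet_Ioo
  have hconst : IntegrableOn (fun _ => t) (Ioo p 1) := integrableOn_const (by simp)
  have hq : IntegrableOn (quantile ν) (Ioo p 1) :=
    (hint_sub.add hconst).congr_fun (fun u _ => sub_add_cancel _ _) measurableSet_Ioo
  rw [hpush, setIntegral_eq_of_subset_of_forall_sdiff_eq_zero measurableSet_Ioo hsub hzero,
    setIntegral_congr_fun measurableSet_Ioo hpos, integral_sub hq hconst, setIntegral_const,
    intervalIntegral.integral_of_le hp.2.le, integral_Ioc_eq_integral_Ioo, measureReal_def,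
    Real.volume_Ioo, ENNReal.toReal_ofReal (sub_nonneg.mpr hp.2.le), smul_eq_mul]

end ProbabilityTheory

theorem stop_loss_transform_identity_general
    {Ω : Type*} [MeasurableSpace Ω] (μ : Measure Ω) [IsProbabilityMeasure μ]
    (X : Ω → ℝ) (hX : Integrable X μ)
    (F : ℝ → ℝ) (hF : ∀ x, F x = (μ {ω | X ω ≤ x}).toReal)
    (VaR : ℝ → ℝ) (hVaR : ∀ u, VaR u = sInf {x | u ≤ F x})
    (ES : ℝ → ℝ) (hES : ∀ u, ES u = (1 - u)⁻¹ * ∫ v in u..1, VaR v)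
    (p : ℝ) (hp : p ∈ Set.Ioo (0:ℝ) 1) :
    (∫ u in p..1, VaR u) - (1 - p) * VaR p = (∫ ω, max (X ω - VaR p) 0 ∂μ)
    ∧ (∫ ω, max (X ω - VaR p) 0 ∂μ) = (∫ x in Set.Ioi (VaR p), (1 - F x))
    ∧ (1 - p) * (ES p - VaR p) = (∫ ω, max (X ω - VaR p) 0 ∂μ) := by
  set ν := μ.map X
  have : IsProbabilityMeasure ν := Measure.isProbabilityMeasure_map hX.aemeasurable
  have hF_cdf : F = cdf ν := funext fun x => by
    rw [hF, cdf_eq_real, measureReal_def,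
      Measure.map_apply_of_aemeasurable hX.aemeasurable measurableSet_Iic]
    rfl
  have hVaR_quantile : VaR = quantile ν := funext fun u => by rw [hVaR, hF_cdf, quantile]
  have hν : Integrable id ν := (integrable_map_measure aestronglyMeasurable_id hX.aemeasurable).2 hX
  have hpush : ∫ ω, max (X ω - VaR p) 0 ∂μ = ∫ x, max (x - VaR p) 0 ∂ν :=
    (integral_map (f := fun x => max (x - VaR p) 0) hX.aemeasurable (by fun_prop)).symm
  have hquant := intervalIntegral_quantile_sub_eq_integral_max_sub hν hp
  rw [← hVaR_quantile] at hquant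
  refine ⟨hpush ▸ hquant, ?_, ?_⟩
  · rw [hpush, hF_cdf, hVaR_quantile, integral_max_sub_eq_integral_Ioi_one_sub_cdf hν]
  · rw [hES, hpush, ← hquant]
    field_simp [sub_ne_zero.mpr hp.2.ne']

/-- For an integrable random variable `X` with continuous CDF `F`,
`p ∈ (0,1)`, `VaR u = inf {x : F x ≥ u}` and `ES u = (1-u)⁻¹ ∫_u^1 VaR`:
`∫_p^1 VaR_u du - (1-p)·VaR p = E[(X - VaR p)₊] = ∫_{VaR p}^∞ (1 - F x) dx`,
and equivalently `(1-p)(ES p - VaR p)` equals the stop-loss transform. -/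
theorem stop_loss_transform_identity
    {Ω : Type*} [MeasurableSpace Ω] (μ : Measure Ω) [IsProbabilityMeasure μ]
    (X : Ω → ℝ) (hX : Integrable X μ)
    (F : ℝ → ℝ) (hF : ∀ x, F x = (μ {ω | X ω ≤ x}).toReal)
    (hFc : Continuous F)
    (VaR : ℝ → ℝ) (hVaR : ∀ u, VaR u = sInf {x | u ≤ F x})
    (ES : ℝ → ℝ) (hES : ∀ u, ES u = (1 - u)⁻¹ * ∫ v in u..1, VaR v)
    (p : ℝ) (hp : p ∈ Set.Ioo (0:ℝ) 1) :
    (∫ u in p..1, VaR u) - (1 - p) * VaR p = (∫ ω, max (X ω - VaR p) 0 ∂μ)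
    ∧ (∫ ω, max (X ω - VaR p) 0 ∂μ) = (∫ x in Set.Ioi (VaR p), (1 - F x))
    ∧ (1 - p) * (ES p - VaR p) = (∫ ω, max (X ω - VaR p) 0 ∂μ) :=
  stop_loss_transform_identity_general μ X hX F hF VaR hVaR ES hES p hp
end

section
/- Let X be an integrable real random variable with continuous and strictly increasing cumulative distribution function, and let p ∈ (0,1) satisfy VaR_p(X) > E[X] and ES_p(X) > VaR_p(X). Then θ_p := (1−p)(ES_p(X) − VaR_p(X))/(VaR_p(X) − E[X]) = E[(X − VaR_p(X))₊]/(VaR_p(X) − E[X]) is strictly positive, satisfies FES_p(X; θ_p) = VaR_p(X), and is the unique θ > 0 with this property: if θ, θ' > 0 and FES_p(X;θ) = FES_p(X;θ') = VaR_p(X), then θ = θ'. -/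
open MeasureTheory Set

/-!
Write `q = VaR_p(X)`. By the layer-cake formula both `E[(X - q)₊]` and `∫_p^1 (VaR_v - q) dv`
equal `∫_0^∞ (1 - F(q + t)) dt`: the event `X > q + t` has probability `1 - F(q + t)`, and since
`F` is strictly increasing, the levels `v ∈ (p, 1)` with `VaR_v > q + t` form the interval
`(F(q + t), 1)`. Hence `(1 - p)(ES_p - q) = E[(X - q)₊]`. Finally `FES_p(X; θ) = q` is equivalent
to the linear equation `θ (q - E[X]) = (1 - p)(ES_p - q)`, whose slope `q - E[X]` is nonzero.
-/

theorem weighted_mean_eq_iff {a e m q θ : ℝ} (h : a + θ ≠ 0) :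
    (a * e + θ * m) / (a + θ) = q ↔ θ * (q - m) = a * (e - q) := by
  rw [div_eq_iff h]
  constructor <;> intro h' <;> linarith

section Quantile

variable {F VaR : ℝ → ℝ}

theorem lt_quantile_iff (hFm : StrictMono F) {v : ℝ} (hv : F (VaR v) = v) (x : ℝ) :
    x < VaR v ↔ F x < v := by
  rw [← hFm.lt_iff_lt, hv]

theorem monotoneOn_quantile (hFm : StrictMono F)
    (hVaR : ∀ u ∈ Ioo (0 : ℝ) 1, F (VaR u) = u) : MonotoneOn VaR (Ioo 0 1) := by
  intro a ha b hb hab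
  rw [← hFm.le_iff_le, hVaR a ha, hVaR b hb]
  exact hab

theorem setOf_lt_quantile_inter_Ioo (hFm : StrictMono F)
    (hVaR : ∀ u ∈ Ioo (0 : ℝ) 1, F (VaR u) = u) {p y : ℝ} (hp : 0 ≤ p) (hy : p ≤ F y) :
    {v | y < VaR v} ∩ Ioo p 1 = Ioo (F y) 1 := by
  ext v
  simp only [mem_inter_iff, mem_ofPred_eq, mem_Ioo]
  constructor
  · rintro ⟨hyv, hpv, hv1⟩
    exact ⟨(lt_quantile_iff hFm (hVaR v ⟨hp.trans_lt hpv, hv1⟩) y).1 hyv, hv1⟩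
  · rintro ⟨hFyv, hv1⟩
    have hpv : p < v := hy.trans_lt hFyv
    exact ⟨(lt_quantile_iff hFm (hVaR v ⟨hp.trans_lt hpv, hv1⟩) y).2 hFyv, hpv, hv1⟩

end Quantile

section StopLoss

variable {Ω : Type*} [MeasurableSpace Ω] {μ : Measure Ω} [IsProbabilityMeasure μ]
  {X : Ω → ℝ} {F VaR : ℝ → ℝ}

theorem measure_lt_eq_ofReal_one_sub_cdf (hX : AEMeasurable X μ)
    (hF : ∀ x, F x = (μ {ω | X ω ≤ x}).toReal) (x : ℝ) :
    μ {ω | x < X ω} = ENNReal.ofReal (1 - F x) := by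
  have hcompl : {ω | x < X ω} = {ω | X ω ≤ x}ᶜ := by
    ext ω
    simp
  have hmeas : NullMeasurableSet {ω | X ω ≤ x} μ := hX.nullMeasurable measurableSet_Iic
  rw [hcompl, prob_compl_eq_one_sub₀ hmeas, hF,
    ENNReal.ofReal_sub _ ENNReal.toReal_nonneg, ENNReal.ofReal_one,
    ENNReal.ofReal_toReal (measure_ne_top μ _)]

theorem measure_posPart_sub_quantile_gt (hX : AEMeasurable X μ)
    (hF : ∀ x, F x = (μ {ω | X ω ≤ x}).toReal) (hFm : StrictMono F)
    (hVaR : ∀ u ∈ Ioo (0 : ℝ) 1, F (VaR u) = u) {p : ℝ} (hp : p ∈ Ioo (0 : ℝ) 1)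
    {t : ℝ} (ht : 0 < t) :
    μ {ω | t < max (X ω - VaR p) 0} = volume.restrict (Ioo p 1) {v | t < VaR v - VaR p} := by
  have hFt : p ≤ F (VaR p + t) := (hVaR p hp).ge.trans (hFm (lt_add_of_pos_right _ ht)).le
  have hX_tail : {ω | t < max (X ω - VaR p) 0} = {ω | VaR p + t < X ω} := by
    ext ω
    simp only [mem_ofPred_eq, lt_max_iff, ht.not_gt, or_false, lt_sub_iff_add_lt']
  have hVaR_tail : {v | t < VaR v - VaR p} = {v | VaR p + t < VaR v} := by
    ext v
    simp only [mem_ofPred_eq, lt_sub_iff_add_lt']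
  rw [hX_tail, measure_lt_eq_ofReal_one_sub_cdf hX hF, Measure.restrict_apply' measurableSet_Ioo,
    hVaR_tail, setOf_lt_quantile_inter_Ioo hFm hVaR hp.1.le hFt, Real.volume_Ioo]

theorem integral_posPart_sub_quantile (hX : Integrable X μ)
    (hF : ∀ x, F x = (μ {ω | X ω ≤ x}).toReal) (hFm : StrictMono F)
    (hVaR : ∀ u ∈ Ioo (0 : ℝ) 1, F (VaR u) = u) {p : ℝ} (hp : p ∈ Ioo (0 : ℝ) 1) :
    IntegrableOn VaR (Ioo p 1) ∧
      ∫ ω, max (X ω - VaR p) 0 ∂μ = ∫ v in Ioo p 1, (VaR v - VaR p) := by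
  set f : Ω → ℝ := fun ω => max (X ω - VaR p) 0
  set w : ℝ → ℝ := fun v => VaR v - VaR p
  have hf_nonneg : 0 ≤ᵐ[μ] f := .of_forall fun _ => le_max_right _ _
  have hw_nonneg : 0 ≤ᵐ[volume.restrict (Ioo p 1)] w :=
    (ae_restrict_iff' measurableSet_Ioo).2 <| .of_forall fun v hv => sub_nonneg.2 <|
      monotoneOn_quantile hFm hVaR hp ⟨hp.1.trans hv.1, hv.2⟩ hv.1.le
  have hf_int : Integrable f μ := (hX.sub (integrable_const _)).pos_part
  have hw_meas : AEMeasurable w (volume.restrict (Ioo p 1)) :=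
    ((monotoneOn_quantile hFm hVaR).mono (Ioo_subset_Ioo_left hp.1.le)
      |> aemeasurable_restrict_of_monotoneOn measurableSet_Ioo).sub_const _
  have hlayer : ∫⁻ ω, ENNReal.ofReal (f ω) ∂μ = ∫⁻ v in Ioo p 1, ENNReal.ofReal (w v) := by
    rw [lintegral_eq_lintegral_meas_lt μ hf_nonneg hf_int.aemeasurable,
      lintegral_eq_lintegral_meas_lt _ hw_nonneg hw_meas]
    exact setLIntegral_congr_fun measurableSet_Ioi fun t ht =>
      measure_posPart_sub_quantile_gt hX.aemeasurable hF hFm hVaR hp ht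
  have hw_int : IntegrableOn w (Ioo p 1) := by
    refine ⟨hw_meas.aestronglyMeasurable, ?_⟩
    rw [hasFiniteIntegral_iff_ofReal hw_nonneg, ← hlayer]
    exact hf_int.lintegral_lt_top
  refine ⟨(hw_int.add (integrable_const (VaR p))).congr
    (.of_forall fun v => sub_add_cancel (VaR v) (VaR p)), ?_⟩
  rw [integral_eq_lintegral_of_nonneg_ae hf_nonneg hf_int.aestronglyMeasurable,
    integral_eq_lintegral_of_nonneg_ae hw_nonneg hw_int.aestronglyMeasurable, hlayer]

end StopLoss

theorem theta_index_characterizes_pelvar_general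
    {Ω : Type*} [MeasurableSpace Ω] (μ : Measure Ω) [IsProbabilityMeasure μ]
    (X : Ω → ℝ) (hX : Integrable X μ)
    (F : ℝ → ℝ) (hF : ∀ x, F x = (μ {ω | X ω ≤ x}).toReal)
    (hFm : StrictMono F)
    (VaR : ℝ → ℝ) (hVaR : ∀ u ∈ Set.Ioo (0:ℝ) 1, F (VaR u) = u)
    (ES : ℝ → ℝ) (hES : ∀ u ∈ Set.Ioo (0:ℝ) 1, ES u = (1 - u)⁻¹ * ∫ v in u..1, VaR v)
    (p : ℝ) (hp : p ∈ Set.Ioo (0:ℝ) 1)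
    (hD : (∫ ω, X ω ∂μ) < VaR p) (hSV : VaR p < ES p)
    (θp : ℝ)
    (hθp : θp = (1 - p) * (ES p - VaR p) / (VaR p - ∫ ω, X ω ∂μ)) :
    0 < θp
    ∧ θp = (∫ ω, max (X ω - VaR p) 0 ∂μ) / (VaR p - ∫ ω, X ω ∂μ)
    ∧ ((1 - p) * ES p + θp * ∫ ω, X ω ∂μ) / (1 - p + θp) = VaR p
    ∧ ∀ θ θ' : ℝ, 0 < θ → 0 < θ' →
        ((1 - p) * ES p + θ * ∫ ω, X ω ∂μ) / (1 - p + θ) = VaR p →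
        ((1 - p) * ES p + θ' * ∫ ω, X ω ∂μ) / (1 - p + θ') = VaR p →
        θ = θ' := by
  have h1p : 0 < 1 - p := sub_pos.2 hp.2
  have hgap : 0 < VaR p - ∫ ω, X ω ∂μ := sub_pos.2 hD
  obtain ⟨hVaR_int, hstopLoss⟩ := integral_posPart_sub_quantile hX hF hFm hVaR hp
  have hES_stopLoss : (1 - p) * (ES p - VaR p) = ∫ ω, max (X ω - VaR p) 0 ∂μ := by
    rw [hstopLoss, integral_sub hVaR_int (integrable_const _), setIntegral_const,
      Real.volume_real_Ioo_of_le hp.2.le, smul_eq_mul, hES p hp, intervalIntegral.integral_of_le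
      hp.2.le, integral_Ioc_eq_integral_Ioo]
    field_simp
  have hθp_pos : 0 < θp := hθp ▸ div_pos (mul_pos h1p (sub_pos.2 hSV)) hgap
  have hFES_iff : ∀ θ, 0 < θ → (((1 - p) * ES p + θ * ∫ ω, X ω ∂μ) / (1 - p + θ) = VaR p ↔
      θ * (VaR p - ∫ ω, X ω ∂μ) = (1 - p) * (ES p - VaR p)) := fun θ hθ =>
    weighted_mean_eq_iff (by linarith)
  refine ⟨hθp_pos, hθp.trans (by rw [hES_stopLoss]), ?_, ?_⟩
  · rw [hFES_iff θp hθp_pos, hθp, div_mul_cancel₀ _ hgap.ne']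
  · intro θ θ' hθ hθ' h h'
    exact mul_right_cancel₀ hgap.ne' (((hFES_iff θ hθ).1 h).trans ((hFES_iff θ' hθ').1 h').symm)

/-- For an integrable random variable `X` with continuous, strictly
increasing CDF `F` (so `VaR u` is the unique `x` with `F x = u`), and
`p ∈ (0,1)` with `VaR p > E[X]` and `ES p > VaR p`, the quantity
`θp = (1-p)(ES p - VaR p)/(VaR p - E[X])` is strictly positive, equals
`E[(X - VaR p)₊]/(VaR p - E[X])`, satisfies `FES_p(X; θp) = VaR p`, and is the
unique positive flexibility level with that property. -/
theorem theta_index_characterizes_pelvar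
    {Ω : Type*} [MeasurableSpace Ω] (μ : Measure Ω) [IsProbabilityMeasure μ]
    (X : Ω → ℝ) (hX : Integrable X μ)
    (F : ℝ → ℝ) (hF : ∀ x, F x = (μ {ω | X ω ≤ x}).toReal)
    (hFc : Continuous F) (hFm : StrictMono F)
    (VaR : ℝ → ℝ) (hVaR : ∀ u ∈ Set.Ioo (0:ℝ) 1, F (VaR u) = u)
    (ES : ℝ → ℝ) (hES : ∀ u ∈ Set.Ioo (0:ℝ) 1, ES u = (1 - u)⁻¹ * ∫ v in u..1, VaR v)
    (p : ℝ) (hp : p ∈ Set.Ioo (0:ℝ) 1)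
    (hD : (∫ ω, X ω ∂μ) < VaR p) (hSV : VaR p < ES p)
    (θp : ℝ)
    (hθp : θp = (1 - p) * (ES p - VaR p) / (VaR p - ∫ ω, X ω ∂μ)) :
    0 < θp
    ∧ θp = (∫ ω, max (X ω - VaR p) 0 ∂μ) / (VaR p - ∫ ω, X ω ∂μ)
    ∧ ((1 - p) * ES p + θp * ∫ ω, X ω ∂μ) / (1 - p + θp) = VaR p
    ∧ ∀ θ θ' : ℝ, 0 < θ → 0 < θ' →
        ((1 - p) * ES p + θ * ∫ ω, X ω ∂μ) / (1 - p + θ) = VaR p →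
        ((1 - p) * ES p + θ' * ∫ ω, X ω ∂μ) / (1 - p + θ') = VaR p →
        θ = θ' :=
  theta_index_characterizes_pelvar_general μ X hX F hF hFm VaR hVaR ES hES p hp hD hSV θp hθp
end

section
/- Let q : (0,1) → ℝ be a continuous, strictly increasing, integrable function with m = ∫_0^1 q(u) du, and suppose q is not constant (so that lim_{p→0⁺} q(p) < m). Then for every θ > 0 there exists a unique p ∈ (0,1) such that q(p) > m and ∫_p^1 (q(u) − q(p)) du = θ·(q(p) − m); equivalently, the mixture FES_θ(p) = ((1−p)·ES(p) + θ·m)/(1−p+θ) equals q(p) at exactly one probability level p with q(p) > m. -/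
open MeasureTheory Set Filter Topology

/-! Let `G(p) = ∫_p^1 (q u - q p) du - θ (q p - m)`. The integral is positive and antitone in `p`
(moving `p` to the right drops a nonnegative piece of it and raises `q p`), while `θ (q p - m)` is
strictly increasing, so `G` is strictly decreasing on `(0,1)` and has at most one zero.
Being strictly increasing, `q` takes values on both sides of its mean `m`: `G > 0` wherever
`q p < m`, and `G < 0` near `1` past a point where `q p > m`, since the tail integral tends to `0`.
The intermediate value theorem gives the zero; there `θ (q p - m)` equals a positive integral, so
`q p > m`, and the `FES_θ` identity is the same equation rearranged. -/

section StrictMonoOnIoo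

variable {q : ℝ → ℝ} {a b c : ℝ}

lemma StrictMonoOn.lt_of_forall_le_Ioo (hmono : StrictMonoOn q (Ioo a b))
    (h : ∀ u ∈ Ioo a b, q u ≤ c) {u : ℝ} (hu : u ∈ Ioo a b) : q u < c := by
  have hv : (u + b) / 2 ∈ Ioo a b := ⟨by linarith [hu.1, hu.2], by linarith [hu.2]⟩
  exact (hmono hu hv (by linarith [hu.2])).trans_le (h _ hv)

lemma StrictMonoOn.lt_of_forall_ge_Ioo (hmono : StrictMonoOn q (Ioo a b))
    (h : ∀ u ∈ Ioo a b, c ≤ q u) {u : ℝ} (hu : u ∈ Ioo a b) : c < q u := by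
  have hv : (a + u) / 2 ∈ Ioo a b := ⟨by linarith [hu.1], by linarith [hu.1, hu.2]⟩
  exact (h _ hv).trans_lt (hmono hv hu (by linarith [hu.1]))

lemma StrictMonoOn.intervalIntegral_lt_mul (hab : a < b) (hmono : StrictMonoOn q (Ioo a b))
    (hint : IntervalIntegrable q volume a b) (h : ∀ u ∈ Ioo a b, q u ≤ c) :
    ∫ u in a..b, q u < (b - a) * c := by
  have hpos : 0 < ∫ u in a..b, (c - q u) :=
    intervalIntegral.intervalIntegral_pos_of_pos_on (intervalIntegrable_const.sub hint)
      (fun u hu => sub_pos.2 (hmono.lt_of_forall_le_Ioo h hu)) hab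
  rw [intervalIntegral.integral_sub intervalIntegrable_const hint,
    intervalIntegral.integral_const, smul_eq_mul] at hpos
  linarith

lemma StrictMonoOn.mul_lt_intervalIntegral (hab : a < b) (hmono : StrictMonoOn q (Ioo a b))
    (hint : IntervalIntegrable q volume a b) (h : ∀ u ∈ Ioo a b, c ≤ q u) :
    (b - a) * c < ∫ u in a..b, q u := by
  have hpos : 0 < ∫ u in a..b, (q u - c) :=
    intervalIntegral.intervalIntegral_pos_of_pos_on (hint.sub intervalIntegrable_const)
      (fun u hu => sub_pos.2 (hmono.lt_of_forall_ge_Ioo h hu)) hab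
  rw [intervalIntegral.integral_sub hint intervalIntegrable_const,
    intervalIntegral.integral_const, smul_eq_mul] at hpos
  linarith

end StrictMonoOnIoo

section QuantileOnUnitInterval

variable {q : ℝ → ℝ} {m θ p a b : ℝ}

lemma IntervalIntegrable.of_mem_Icc_zero_one (hint : IntervalIntegrable q volume 0 1)
    (ha : a ∈ Icc (0 : ℝ) 1) (hb : b ∈ Icc (0 : ℝ) 1) : IntervalIntegrable q volume a b := by
  rw [← uIcc_of_le zero_le_one] at ha hb
  exact hint.mono_set (uIcc_subset_uIcc ha hb)

lemma continuousOn_intervalIntegral_to_one (hint : IntervalIntegrable q volume 0 1) :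
    ContinuousOn (fun p => ∫ u in p..1, q u) (Icc 0 1) := by
  have := intervalIntegral.continuousOn_primitive_interval_left
    ((intervalIntegrable_iff' (a := 0) (b := 1)).1 hint)
  rwa [uIcc_of_le zero_le_one] at this

lemma intervalIntegral_sub_apply_eq (hint : IntervalIntegrable q volume 0 1)
    (hp : p ∈ Icc (0 : ℝ) 1) :
    ∫ u in p..1, (q u - q p) = (∫ u in p..1, q u) - (1 - p) * q p := by
  rw [intervalIntegral.integral_sub (hint.of_mem_Icc_zero_one hp (right_mem_Icc.2 zero_le_one))
    intervalIntegrable_const, intervalIntegral.integral_const, smul_eq_mul]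

lemma intervalIntegral_sub_apply_pos (hmono : StrictMonoOn q (Ioo 0 1))
    (hint : IntervalIntegrable q volume 0 1) (hp : p ∈ Ioo (0 : ℝ) 1) :
    0 < ∫ u in p..1, (q u - q p) :=
  intervalIntegral.intervalIntegral_pos_of_pos_on
    ((hint.of_mem_Icc_zero_one (Ioo_subset_Icc_self hp) (right_mem_Icc.2 zero_le_one)).sub
      intervalIntegrable_const)
    (fun _ hu => sub_pos.2 (hmono hp ⟨hp.1.trans hu.1, hu.2⟩ hu.1)) hp.2

lemma antitoneOn_intervalIntegral_sub_apply (hmono : StrictMonoOn q (Ioo 0 1))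
    (hint : IntervalIntegrable q volume 0 1) :
    AntitoneOn (fun p => ∫ u in p..1, (q u - q p)) (Ioo 0 1) := by
  intro p₁ hp₁ p₂ hp₂ h₁₂
  have hIcc : Icc p₁ p₂ ⊆ Ioo 0 1 := Icc_subset_Ioo hp₁.1 hp₂.2
  have hint₁₂ := hint.of_mem_Icc_zero_one (hIcc.trans Ioo_subset_Icc_self (left_mem_Icc.2 h₁₂))
    (hIcc.trans Ioo_subset_Icc_self (right_mem_Icc.2 h₁₂))
  have hsplit : ∫ u in p₁..1, q u = (∫ u in p₁..p₂, q u) + ∫ u in p₂..1, q u :=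
    (intervalIntegral.integral_add_adjacent_intervals hint₁₂
      (hint.of_mem_Icc_zero_one (Ioo_subset_Icc_self hp₂) (right_mem_Icc.2 zero_le_one))).symm
  have hlower : (p₂ - p₁) * q p₁ ≤ ∫ u in p₁..p₂, q u := by
    simpa [intervalIntegral.integral_const, smul_eq_mul] using
      intervalIntegral.integral_mono_on h₁₂ intervalIntegrable_const hint₁₂
        (fun _ hu => hmono.le_iff_le hp₁ (hIcc hu) |>.2 hu.1)
  have hq₁₂ : q p₁ ≤ q p₂ := hmono.le_iff_le hp₁ hp₂ |>.2 h₁₂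
  simp only [intervalIntegral_sub_apply_eq hint (Ioo_subset_Icc_self hp₁),
    intervalIntegral_sub_apply_eq hint (Ioo_subset_Icc_self hp₂), hsplit]
  nlinarith [hp₂.2]

lemma exists_apply_lt_mean (hmono : StrictMonoOn q (Ioo 0 1))
    (hint : IntervalIntegrable q volume 0 1) (hm : m = ∫ u in (0 : ℝ)..1, q u) :
    ∃ p ∈ Ioo (0 : ℝ) 1, q p < m := by
  by_contra! h
  have := hmono.mul_lt_intervalIntegral zero_lt_one hint h
  rw [← hm] at this
  linarith

lemma exists_mean_lt_apply (hmono : StrictMonoOn q (Ioo 0 1))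
    (hint : IntervalIntegrable q volume 0 1) (hm : m = ∫ u in (0 : ℝ)..1, q u) :
    ∃ p ∈ Ioo (0 : ℝ) 1, m < q p := by
  by_contra! h
  have := hmono.intervalIntegral_lt_mul zero_lt_one hint h
  rw [← hm] at this
  linarith

noncomputable def pelGap (q : ℝ → ℝ) (m θ p : ℝ) : ℝ := (∫ u in p..1, (q u - q p)) - θ * (q p - m)

lemma pelGap_strictAntiOn (hmono : StrictMonoOn q (Ioo 0 1))
    (hint : IntervalIntegrable q volume 0 1) (hθ : 0 < θ) :
    StrictAntiOn (pelGap q m θ) (Ioo 0 1) := by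
  intro p₁ hp₁ p₂ hp₂ h₁₂
  have hint_le := antitoneOn_intervalIntegral_sub_apply hmono hint hp₁ hp₂ h₁₂.le
  have hq_lt := mul_lt_mul_of_pos_left (hmono hp₁ hp₂ h₁₂) hθ
  simp only [pelGap] at hint_le ⊢
  linarith

lemma pelGap_continuousOn (hcont : ContinuousOn q (Ioo 0 1))
    (hint : IntervalIntegrable q volume 0 1) : ContinuousOn (pelGap q m θ) (Ioo 0 1) := by
  have hI := (continuousOn_intervalIntegral_to_one hint).mono Ioo_subset_Icc_self
  have hG : ContinuousOn (fun p => (∫ u in p..1, q u) - (1 - p) * q p - θ * (q p - m))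
      (Ioo 0 1) := by fun_prop
  exact hG.congr fun p hp => by
    rw [pelGap, intervalIntegral_sub_apply_eq hint (Ioo_subset_Icc_self hp)]

lemma pelGap_pos (hmono : StrictMonoOn q (Ioo 0 1)) (hint : IntervalIntegrable q volume 0 1)
    (hθ : 0 ≤ θ) (hp : p ∈ Ioo (0 : ℝ) 1) (hqp : q p < m) : 0 < pelGap q m θ p := by
  have := intervalIntegral_sub_apply_pos hmono hint hp
  unfold pelGap
  nlinarith

lemma lt_apply_of_pelGap_eq_zero (hmono : StrictMonoOn q (Ioo 0 1))
    (hint : IntervalIntegrable q volume 0 1) (hθ : 0 < θ) (hp : p ∈ Ioo (0 : ℝ) 1)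
    (h : pelGap q m θ p = 0) : m < q p := by
  have := intervalIntegral_sub_apply_pos hmono hint hp
  unfold pelGap at h
  nlinarith

lemma fes_eq_of_pelGap_eq_zero (hint : IntervalIntegrable q volume 0 1) (hθ : 0 ≤ θ)
    (hp : p ∈ Ioo (0 : ℝ) 1) (h : pelGap q m θ p = 0) :
    ((1 - p) * ((1 - p)⁻¹ * ∫ u in p..1, q u) + θ * m) / (1 - p + θ) = q p := by
  rw [pelGap, intervalIntegral_sub_apply_eq hint (Ioo_subset_Icc_self hp)] at h
  have h1p : 1 - p ≠ 0 := by linarith [hp.2]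
  rw [div_eq_iff (by linarith [hp.2]), mul_inv_cancel_left₀ h1p]
  linarith

lemma exists_pelGap_neg (hmono : StrictMonoOn q (Ioo 0 1))
    (hint : IntervalIntegrable q volume 0 1) (hθ : 0 < θ) {p₁ : ℝ} (hp₁ : p₁ ∈ Ioo (0 : ℝ) 1)
    (hqp₁ : m < q p₁) (ha : a < 1) : ∃ b ∈ Ioo a 1, pelGap q m θ b < 0 := by
  have hI : Tendsto (fun b => ∫ u in b..1, q u) (𝓝[<] 1) (𝓝 0) := by
    have hI1 := continuousOn_intervalIntegral_to_one hint 1 (right_mem_Icc.2 zero_le_one)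
    simpa using hI1.tendsto.mono_left (nhdsWithin_le_of_mem (Icc_mem_nhdsLT zero_lt_one))
  have hlim : Tendsto (fun b => (∫ u in b..1, q u) - (1 - b) * q p₁ - θ * (q p₁ - m))
      (𝓝[<] 1) (𝓝 (0 - (1 - 1) * q p₁ - θ * (q p₁ - m))) :=
    (hI.sub ((tendsto_const_nhds.sub (tendsto_id.mono_left nhdsWithin_le_nhds)).mul_const
      (q p₁))).sub_const _
  have hneg : 0 - (1 - 1) * q p₁ - θ * (q p₁ - m) < 0 := by nlinarith
  obtain ⟨b, hb, hbI⟩ := (Eventually.and (Ioo_mem_nhdsLT (max_lt ha hp₁.2))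
    (hlim.eventually (gt_mem_nhds hneg))).exists
  have hb01 : b ∈ Ioo (0 : ℝ) 1 := ⟨hp₁.1.trans ((le_max_right _ _).trans_lt hb.1), hb.2⟩
  have hq : q p₁ ≤ q b := hmono.le_iff_le hp₁ hb01 |>.2 ((le_max_right _ _).trans hb.1.le)
  refine ⟨b, ⟨(le_max_left _ _).trans_lt hb.1, hb.2⟩, ?_⟩
  rw [pelGap, intervalIntegral_sub_apply_eq hint (Ioo_subset_Icc_self hb01)]
  nlinarith [hb.2]

end QuantileOnUnitInterval

theorem pel_exists_unique_general
    (q : ℝ → ℝ)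
    (hq_cont : ContinuousOn q (Set.Ioo 0 1))
    (hq_mono : StrictMonoOn q (Set.Ioo 0 1))
    (hq_int : IntervalIntegrable q volume 0 1)
    (m : ℝ) (hm : m = ∫ u in (0:ℝ)..1, q u) :
    ∀ θ : ℝ, 0 < θ →
      ∃! p : ℝ, p ∈ Set.Ioo (0:ℝ) 1 ∧ m < q p ∧
        (∫ u in p..1, (q u - q p)) = θ * (q p - m) ∧
        ((1 - p) * ((1 - p)⁻¹ * ∫ u in p..1, q u) + θ * m) / (1 - p + θ) = q p := by
  intro θ hθ
  obtain ⟨p₀, hp₀, hqp₀⟩ := exists_apply_lt_mean hq_mono hq_int hm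
  obtain ⟨p₁, hp₁, hqp₁⟩ := exists_mean_lt_apply hq_mono hq_int hm
  obtain ⟨b, hb, hGb⟩ := exists_pelGap_neg hq_mono hq_int hθ hp₁ hqp₁ hp₀.2
  have hGp₀ := pelGap_pos hq_mono hq_int hθ.le hp₀ hqp₀
  have hsub : Icc p₀ b ⊆ Ioo 0 1 := Icc_subset_Ioo hp₀.1 hb.2
  obtain ⟨c, hc, hGc⟩ := intermediate_value_Icc' hb.1.le
    ((pelGap_continuousOn hq_cont hq_int).mono hsub) ⟨hGb.le, hGp₀.le⟩
  refine ⟨c, ⟨hsub hc, lt_apply_of_pelGap_eq_zero hq_mono hq_int hθ (hsub hc) hGc,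
    sub_eq_zero.1 hGc, fes_eq_of_pelGap_eq_zero hq_int hθ.le (hsub hc) hGc⟩, ?_⟩
  rintro p ⟨hp, -, hpeq, -⟩
  exact (pelGap_strictAntiOn hq_mono hq_int hθ).injOn hp (hsub hc)
    ((sub_eq_zero.2 hpeq).trans hGc.symm)

/-- For a continuous, strictly increasing, integrable quantile function `q`
on (0,1) with mean `m = ∫_0^1 q` that is not constant (equivalently, its limit as
`p → 0⁺`, i.e. its infimum over (0,1), is `< m`, which amounts to `∃ p ∈ (0,1), q p < m`),
for every `θ > 0` there is a unique `p ∈ (0,1)` with `q p > m` and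
`∫_p^1 (q u - q p) du = θ·(q p - m)`; equivalently `FES_θ(p) = q p` at exactly one such level. -/
theorem pel_exists_unique
    (q : ℝ → ℝ)
    (hq_cont : ContinuousOn q (Set.Ioo 0 1))
    (hq_mono : StrictMonoOn q (Set.Ioo 0 1))
    (hq_int : IntervalIntegrable q volume 0 1)
    (m : ℝ) (hm : m = ∫ u in (0:ℝ)..1, q u)
    (h_nonconst : ∃ p ∈ Set.Ioo (0:ℝ) 1, q p < m) :
    ∀ θ : ℝ, 0 < θ →
      ∃! p : ℝ, p ∈ Set.Ioo (0:ℝ) 1 ∧ m < q p ∧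
        (∫ u in p..1, (q u - q p)) = θ * (q p - m) ∧
        ((1 - p) * ((1 - p)⁻¹ * ∫ u in p..1, q u) + θ * m) / (1 - p + θ) = q p :=
  pel_exists_unique_general q hq_cont hq_mono hq_int m hm
end

section
/- Let X be an integrable real random variable with continuous and strictly increasing cumulative distribution function, let a > 0 and b ∈ ℝ, and let p ∈ D_X. Then p ∈ D_{aX+b} and θ_p(aX + b) = θ_p(X); that is, the θ-index is invariant under location-scale transformations. -/
open MeasureTheory Set

/-- The cumulative distribution function of a random variable `X` under `μ`. -/
noncomputable def rvCdf {Ω : Type*} [MeasurableSpace Ω]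
    (μ : Measure Ω) (X : Ω → ℝ) : ℝ → ℝ :=
  fun x => (μ {ω | X ω ≤ x}).toReal

/-- Value at Risk at level `p`: the (left) `p`-quantile of `X`; for a continuous,
strictly increasing CDF this is the unique `x` with `F x = p`. -/
noncomputable def rvVaR {Ω : Type*} [MeasurableSpace Ω]
    (μ : Measure Ω) (X : Ω → ℝ) (p : ℝ) : ℝ :=
  sInf {x | p ≤ rvCdf μ X x}

/-- Expected Shortfall at level `p`. -/
noncomputable def rvES {Ω : Type*} [MeasurableSpace Ω]
    (μ : Measure Ω) (X : Ω → ℝ) (p : ℝ) : ℝ :=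
  (1 - p)⁻¹ * ∫ u in p..1, rvVaR μ X u

/-- The θ-index `θ_p(X) = (1-p)(ES_p - VaR_p)/(VaR_p - E[X])`. -/
noncomputable def rvThetaIndex {Ω : Type*} [MeasurableSpace Ω]
    (μ : Measure Ω) (X : Ω → ℝ) (p : ℝ) : ℝ :=
  (1 - p) * (rvES μ X p - rvVaR μ X p) / (rvVaR μ X p - ∫ ω, X ω ∂μ)

/-!
When the CDF `F` of `X` is continuous and strictly increasing, `VaR_q(X)` is the exact inverse
`F⁻¹(q)`, and `F_{aX+b}(x) = F((x - b)/a)`. Hence VaR, ES and the mean all transform as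
`v ↦ a v + b`, and `θ_p`, a quotient of differences of these, is unchanged.

The one analytic point is that ES is a genuine integral: `u ↦ VaR_u(X)` pushes the uniform law on
`(0,1)` forward to the law of `X`, so the quantile function is integrable because `X` is.
-/

open Filter ProbabilityTheory

section

variable {Ω : Type*} [MeasurableSpace Ω] {μ : Measure Ω} {X : Ω → ℝ}

lemma rvCdf_affine {a : ℝ} (ha : 0 < a) (b x : ℝ) :
    rvCdf μ (fun ω => a * X ω + b) x = rvCdf μ X ((x - b) / a) := by
  simp only [rvCdf, le_div_iff₀ ha, le_sub_iff_add_le, mul_comm a]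

lemma strictMono_rvCdf_affine (hF : StrictMono (rvCdf μ X)) {a : ℝ} (ha : 0 < a) (b : ℝ) :
    StrictMono (rvCdf μ fun ω => a * X ω + b) := fun x y hxy => by
  simpa only [rvCdf_affine ha] using hF (by gcongr)

lemma rvVaR_eq_of_rvCdf_eq (hF : StrictMono (rvCdf μ X)) {x q : ℝ} (hx : rvCdf μ X x = q) :
    rvVaR μ X q = x := by
  have : {y | q ≤ rvCdf μ X y} = Ici x := by ext y; simp [← hx, hF.le_iff_le]
  rw [rvVaR, this, csInf_Ici]

variable [IsProbabilityMeasure μ]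

lemma rvCdf_eq_cdf_map (hX : AEMeasurable X μ) : rvCdf μ X = cdf (μ.map X) := by
  have := Measure.isProbabilityMeasure_map hX
  ext x
  rw [cdf_eq_real, measureReal_def, Measure.map_apply_of_aemeasurable hX measurableSet_Iic]
  rfl

lemma rvCdf_rvVaR (hX : AEMeasurable X μ) (hFc : Continuous (rvCdf μ X))
    (hFm : StrictMono (rvCdf μ X)) {q : ℝ} (hq : q ∈ Ioo 0 1) :
    rvCdf μ X (rvVaR μ X q) = q := by
  have hbot : ∃ x, rvCdf μ X x ≤ q := by
    rw [rvCdf_eq_cdf_map hX]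
    exact ((tendsto_cdf_atBot _).eventually (gt_mem_nhds hq.1)).exists.imp fun _ => le_of_lt
  have htop : ∃ x, q ≤ rvCdf μ X x := by
    rw [rvCdf_eq_cdf_map hX]
    exact ((tendsto_cdf_atTop _).eventually (lt_mem_nhds hq.2)).exists.imp fun _ => le_of_lt
  obtain ⟨x, hx⟩ := mem_range_of_exists_le_of_exists_ge hFc hbot htop
  rw [rvVaR_eq_of_rvCdf_eq hFm hx, hx]

lemma rvVaR_le_iff (hX : AEMeasurable X μ) (hFc : Continuous (rvCdf μ X))
    (hFm : StrictMono (rvCdf μ X)) {q : ℝ} (hq : q ∈ Ioo 0 1) (y : ℝ) :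
    rvVaR μ X q ≤ y ↔ q ≤ rvCdf μ X y := by
  conv_rhs => rw [← rvCdf_rvVaR hX hFc hFm hq]
  exact hFm.le_iff_le.symm

lemma monotoneOn_rvVaR (hX : AEMeasurable X μ) (hFc : Continuous (rvCdf μ X))
    (hFm : StrictMono (rvCdf μ X)) : MonotoneOn (rvVaR μ X) (Ioo 0 1) := fun u hu w hw huw => by
  rwa [rvVaR_le_iff hX hFc hFm hu, rvCdf_rvVaR hX hFc hFm hw]

lemma aemeasurable_rvVaR_restrict_Ioo (hX : AEMeasurable X μ) (hFc : Continuous (rvCdf μ X))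
    (hFm : StrictMono (rvCdf μ X)) : AEMeasurable (rvVaR μ X) (volume.restrict (Ioo 0 1)) :=
  aemeasurable_restrict_of_monotoneOn measurableSet_Ioo (monotoneOn_rvVaR hX hFc hFm)

lemma rvCdf_lt_one (hFm : StrictMono (rvCdf μ X)) (x : ℝ) : rvCdf μ X x < 1 :=
  (hFm (lt_add_one x)).trans_le measureReal_le_one

lemma map_rvVaR_restrict_Ioo (hX : AEMeasurable X μ) (hFc : Continuous (rvCdf μ X))
    (hFm : StrictMono (rvCdf μ X)) :
    (volume.restrict (Ioo 0 1)).map (rvVaR μ X) = μ.map X := by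
  have : IsFiniteMeasure (volume.restrict (Ioo (0 : ℝ) 1)) :=
    isFiniteMeasure_restrict.2 measure_Ioo_lt_top.ne
  refine Measure.ext_of_Iic _ _ fun x => ?_
  have hset : rvVaR μ X ⁻¹' Iic x ∩ Ioo 0 1 = Ioc 0 (rvCdf μ X x) := by
    ext u
    simp only [mem_inter_iff, mem_preimage, mem_Iic, mem_Ioo, mem_Ioc]
    constructor
    · rintro ⟨hux, hu⟩
      exact ⟨hu.1, (rvVaR_le_iff hX hFc hFm hu x).1 hux⟩
    · rintro ⟨hu0, hux⟩
      have hu : u ∈ Ioo 0 1 := ⟨hu0, hux.trans_lt (rvCdf_lt_one hFm x)⟩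
      exact ⟨(rvVaR_le_iff hX hFc hFm hu x).2 hux, hu⟩
  rw [Measure.map_apply_of_aemeasurable (aemeasurable_rvVaR_restrict_Ioo hX hFc hFm)
      measurableSet_Iic,
    Measure.restrict_apply' measurableSet_Ioo, hset, Real.volume_Ioc, sub_zero,
    Measure.map_apply_of_aemeasurable hX measurableSet_Iic, rvCdf,
    ENNReal.ofReal_toReal (measure_ne_top _ _)]
  rfl

lemma integrableOn_rvVaR (hX : Integrable X μ) (hFc : Continuous (rvCdf μ X))
    (hFm : StrictMono (rvCdf μ X)) : IntegrableOn (rvVaR μ X) (Ioo 0 1) := by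
  have hmap : Integrable id (μ.map X) :=
    (integrable_map_measure aestronglyMeasurable_id hX.aemeasurable).2 hX
  rw [← map_rvVaR_restrict_Ioo hX.aemeasurable hFc hFm] at hmap
  exact (integrable_map_measure aestronglyMeasurable_id
    (aemeasurable_rvVaR_restrict_Ioo hX.aemeasurable hFc hFm)).1 hmap

lemma intervalIntegrable_rvVaR (hX : Integrable X μ) (hFc : Continuous (rvCdf μ X))
    (hFm : StrictMono (rvCdf μ X)) {p : ℝ} (hp : p ∈ Ioo 0 1) :
    IntervalIntegrable (rvVaR μ X) volume p 1 := by
  rw [intervalIntegrable_iff_integrableOn_Ioo_of_le hp.2.le]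
  exact (integrableOn_rvVaR hX hFc hFm).mono_set (Ioo_subset_Ioo_left hp.1.le)

lemma rvVaR_affine (hX : AEMeasurable X μ) (hFc : Continuous (rvCdf μ X))
    (hFm : StrictMono (rvCdf μ X)) {a : ℝ} (ha : 0 < a) (b : ℝ) {q : ℝ}
    (hq : q ∈ Ioo 0 1) :
    rvVaR μ (fun ω => a * X ω + b) q = a * rvVaR μ X q + b := by
  refine rvVaR_eq_of_rvCdf_eq (strictMono_rvCdf_affine hFm ha b) ?_
  rw [rvCdf_affine ha, add_sub_cancel_right, mul_div_cancel_left₀ _ ha.ne',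
    rvCdf_rvVaR hX hFc hFm hq]

lemma rvES_affine (hX : Integrable X μ) (hFc : Continuous (rvCdf μ X))
    (hFm : StrictMono (rvCdf μ X)) {a : ℝ} (ha : 0 < a) (b : ℝ) {p : ℝ}
    (hp : p ∈ Ioo 0 1) :
    rvES μ (fun ω => a * X ω + b) p = a * rvES μ X p + b := by
  have hI : ∫ u in p..1, rvVaR μ (fun ω => a * X ω + b) u =
      ∫ u in p..1, (a * rvVaR μ X u + b) := by
    refine intervalIntegral.integral_congr_ae ((Measure.ae_ne volume 1).mono fun u hu1 hu => ?_)
    rw [uIoc_of_le hp.2.le] at hu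
    exact rvVaR_affine hX.aemeasurable hFc hFm ha b ⟨hp.1.trans hu.1, hu.2.lt_of_ne hu1⟩
  rw [rvES, rvES, hI, intervalIntegral.integral_add
    ((intervalIntegrable_rvVaR hX hFc hFm hp).const_mul a) intervalIntegrable_const,
    intervalIntegral.integral_const_mul, intervalIntegral.integral_const, smul_eq_mul]
  field_simp [sub_ne_zero.2 hp.2.ne']

end

/-- For an integrable random variable `X` with continuous, strictly
increasing CDF and `p ∈ D_X = {p ∈ (0,1) : VaR_p(X) > E[X]}`, for any `a > 0`,
`b ∈ ℝ` one has `p ∈ D_{aX+b}` and `θ_p(aX + b) = θ_p(X)` (location-scale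
invariance of the θ-index). -/
theorem theta_index_location_scale_invariant
    {Ω : Type*} [MeasurableSpace Ω] (μ : Measure Ω) [IsProbabilityMeasure μ]
    (X : Ω → ℝ) (hX : Integrable X μ)
    (hFc : Continuous (rvCdf μ X)) (hFm : StrictMono (rvCdf μ X))
    (a b : ℝ) (ha : 0 < a)
    (p : ℝ) (hp : p ∈ Set.Ioo (0:ℝ) 1)
    (hD : (∫ ω, X ω ∂μ) < rvVaR μ X p) :
    (∫ ω, (a * X ω + b) ∂μ) < rvVaR μ (fun ω => a * X ω + b) p
    ∧ rvThetaIndex μ (fun ω => a * X ω + b) p = rvThetaIndex μ X p := by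
  have hVaR := rvVaR_affine hX.aemeasurable hFc hFm ha b hp
  have hES := rvES_affine hX hFc hFm ha b hp
  have hE : ∫ ω, (a * X ω + b) ∂μ = a * ∫ ω, X ω ∂μ + b := by
    rw [integral_add (hX.const_mul a) (integrable_const b), integral_const_mul, integral_const,
      probReal_univ, one_smul]
  refine ⟨by rw [hE, hVaR]; gcongr, ?_⟩
  have hden : 0 < rvVaR μ X p - ∫ ω, X ω ∂μ := sub_pos.2 hD
  have hden' : 0 < a * rvVaR μ X p + b - (a * ∫ ω, X ω ∂μ + b) := by nlinarith
  rw [rvThetaIndex, rvThetaIndex, hES, hVaR, hE, div_eq_div_iff hden'.ne' hden.ne']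
  ring
end

section
/- Let q : (0,1) → ℝ be a continuously differentiable, strictly increasing, integrable function with m = ∫_0^1 q(u) du, and define θ(p) = (1−p)(ES(p) − q(p))/(q(p) − m) on D = {p ∈ (0,1) : q(p) > m}. Then θ(p) ≥ 0 for every p ∈ D, and θ is antitone on D: for p₁, p₂ ∈ D with p₁ ≤ p₂ one has θ(p₂) ≤ θ(p₁). -/
open MeasureTheory Set

/-- Key estimate: the integral of a function monotone on `(0,1)` over `[a,b]`
is at least `(b-a) * q a`, for `0 < a ≤ b ≤ 1`. -/
lemma theta_aux_integral_ge
    (q : ℝ → ℝ) (hq_mono : StrictMonoOn q (Set.Ioo 0 1))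
    (hq_int : IntervalIntegrable q volume 0 1)
    {a b : ℝ} (ha : 0 < a) (hab : a ≤ b) (hb : b ≤ 1) :
    (b - a) * q a ≤ ∫ u in a..b, q u := by
  have hsub : Set.uIcc a b ⊆ Set.uIcc (0:ℝ) 1 := by
    rw [Set.uIcc_of_le hab, Set.uIcc_of_le (by norm_num : (0:ℝ) ≤ 1)]
    exact Set.Icc_subset_Icc (le_of_lt ha) hb
  have hint : IntervalIntegrable q volume a b := hq_int.mono_set hsub
  have hconst : (∫ _ in a..b, q a) = (b - a) * q a := by
    simp [intervalIntegral.integral_const, smul_eq_mul]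
  rw [← hconst]
  apply intervalIntegral.integral_mono_ae_restrict hab
    (intervalIntegrable_const) hint
  have hne : ∀ᵐ u ∂(volume.restrict (Set.Icc a b)), u ≠ b := by
    apply ae_restrict_of_ae
    rw [Filter.eventually_iff, mem_ae_iff]
    have : {x : ℝ | x ≠ b}ᶜ = {b} := by ext x; simp
    rw [this]
    exact Real.volume_singleton
  filter_upwards [hne, ae_restrict_mem measurableSet_Icc] with u hu hmem
  have hu1 : u < 1 := lt_of_lt_of_le (lt_of_le_of_ne hmem.2 hu) hb
  have hua : a ≤ u := hmem.1
  exact hq_mono.monotoneOn ⟨ha, lt_of_le_of_lt hua hu1⟩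
    ⟨lt_of_lt_of_le ha hua, hu1⟩ hua

/-- For a continuously differentiable, strictly increasing, integrable
quantile function `q` on (0,1) with mean `m = ∫_0^1 q`, the θ-index
`θ p = (1-p)·(ES p - q p)/(q p - m)` is nonnegative on `D = {p ∈ (0,1) : q p > m}`
and antitone on `D`. -/
theorem theta_index_nonneg_antitone
    (q : ℝ → ℝ)
    (hq_smooth : ContDiffOn ℝ 1 q (Set.Ioo 0 1))
    (hq_mono : StrictMonoOn q (Set.Ioo 0 1))
    (hq_int : IntervalIntegrable q volume 0 1)
    (m : ℝ) (hm : m = ∫ u in (0:ℝ)..1, q u)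
    (θ : ℝ → ℝ)
    (hθ : ∀ p ∈ Set.Ioo (0:ℝ) 1, m < q p →
      θ p = (1 - p) * ((1 - p)⁻¹ * (∫ u in p..1, q u) - q p) / (q p - m)) :
    (∀ p ∈ Set.Ioo (0:ℝ) 1, m < q p → 0 ≤ θ p) ∧
    (∀ p₁ ∈ Set.Ioo (0:ℝ) 1, ∀ p₂ ∈ Set.Ioo (0:ℝ) 1,
      m < q p₁ → m < q p₂ → p₁ ≤ p₂ → θ p₂ ≤ θ p₁) := by
  -- Rewrite θ in a simpler form: θ p = (N p) / (q p - m) with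
  -- N p = (∫ u in p..1, q u) - (1 - p) * q p.
  have hθ' : ∀ p ∈ Set.Ioo (0:ℝ) 1, m < q p →
      θ p = ((∫ u in p..1, q u) - (1 - p) * q p) / (q p - m) := by
    intro p hp hmp
    rw [hθ p hp hmp]
    have h1p : (1 : ℝ) - p ≠ 0 := by
      have := hp.2; intro h; nlinarith
    field_simp
  -- N is nonnegative on D-relevant points.
  have hN : ∀ p ∈ Set.Ioo (0:ℝ) 1, 0 ≤ (∫ u in p..1, q u) - (1 - p) * q p := by
    intro p hp
    have := theta_aux_integral_ge q hq_mono hq_int hp.1 (le_of_lt hp.2) le_rfl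
    linarith
  -- N is antitone.
  have hNanti : ∀ p₁ ∈ Set.Ioo (0:ℝ) 1, ∀ p₂ ∈ Set.Ioo (0:ℝ) 1, p₁ ≤ p₂ →
      (∫ u in p₂..1, q u) - (1 - p₂) * q p₂ ≤ (∫ u in p₁..1, q u) - (1 - p₁) * q p₁ := by
    intro p₁ hp₁ p₂ hp₂ hle
    have hsub : ∀ c d : ℝ, 0 ≤ c → c ≤ d → d ≤ 1 →
        IntervalIntegrable q volume c d := by
      intro c d hc hcd hd
      refine hq_int.mono_set ?_
      rw [Set.uIcc_of_le hcd, Set.uIcc_of_le (by norm_num : (0:ℝ) ≤ 1)]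
      exact Set.Icc_subset_Icc hc hd
    have hsplit : (∫ u in p₁..p₂, q u) + (∫ u in p₂..1, q u) = ∫ u in p₁..1, q u :=
      intervalIntegral.integral_add_adjacent_intervals
        (hsub p₁ p₂ (le_of_lt hp₁.1) hle (le_of_lt hp₂.2))
        (hsub p₂ 1 (le_of_lt hp₂.1) (le_of_lt hp₂.2) le_rfl)
    have hkey : (p₂ - p₁) * q p₁ ≤ ∫ u in p₁..p₂, q u :=
      theta_aux_integral_ge q hq_mono hq_int hp₁.1 hle (le_of_lt hp₂.2)
    have hq12 : q p₁ ≤ q p₂ := hq_mono.monotoneOn hp₁ hp₂ hle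
    have h2 : (1 - p₂) * q p₁ ≤ (1 - p₂) * q p₂ :=
      mul_le_mul_of_nonneg_left hq12 (by linarith [hp₂.2])
    nlinarith [hsplit, hkey, h2]
  constructor
  · intro p hp hmp
    rw [hθ' p hp hmp]
    exact div_nonneg (hN p hp) (by linarith)
  · intro p₁ hp₁ p₂ hp₂ hm₁ hm₂ hle
    rw [hθ' p₁ hp₁ hm₁, hθ' p₂ hp₂ hm₂]
    have hq12 : q p₁ ≤ q p₂ := hq_mono.monotoneOn hp₁ hp₂ hle
    exact div_le_div₀ (hN p₁ hp₁) (hNanti p₁ hp₁ p₂ hp₂ hle) (by linarith)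
      (by linarith)
end

section
/- Let q_X, q_Y : (0,1) → ℝ be continuous, strictly increasing, integrable quantile functions with means m_X = ∫_0^1 q_X, m_Y = ∫_0^1 q_Y, Expected Shortfalls ES_X(p) = (1−p)^{-1}∫_p^1 q_X, ES_Y(p) = (1−p)^{-1}∫_p^1 q_Y, and θ-indices θ_X(p) = (1−p)(ES_X(p) − q_X(p))/(q_X(p) − m_X), θ_Y(p) defined analogously. Let D = {p ∈ (0,1) : q_X(p) > m_X and q_Y(p) > m_Y}. Then θ_X(p) ≤ θ_Y(p) for all p ∈ D if and only if the right-spread ratio p ↦ (ES_Y(p) − m_Y)/(ES_X(p) − m_X) is monotone nondecreasing on D. -/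
open MeasureTheory Set

/-!
With `T(p) = ∫_p^1 (q - m) = (1 - p)(ES(p) - m)`, the right-spread ratio is `T_Y / T_X` and
`θ(p) = T(p) / (q(p) - m) - (1 - p)`. Since `T' = m - q`, the derivative of `T_Y / T_X` is
`((q_X - m_X) T_Y - (q_Y - m_Y) T_X) / T_X²`, which is nonnegative exactly where `θ_X ≤ θ_Y`.
As `D` is an open interval (the quantile functions are continuous and monotone) and `T_X > 0`
on it, monotonicity of the ratio on `D` is equivalent to nonnegativity of this derivative.
-/

noncomputable def expectedShortfall (q : ℝ → ℝ) (p : ℝ) : ℝ :=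
  (1 - p)⁻¹ * ∫ u in p..1, q u

noncomputable def thetaIndex (q : ℝ → ℝ) (m p : ℝ) : ℝ :=
  (1 - p) * (expectedShortfall q p - q p) / (q p - m)

noncomputable def tailExcess (q : ℝ → ℝ) (m p : ℝ) : ℝ :=
  (∫ u in p..1, q u) - (1 - p) * m

theorem MonotoneOn.ordConnected_sep_lt {α β : Type*} [Preorder α] [Preorder β] {s : Set α}
    {f : α → β} (hf : MonotoneOn f s) (hs : s.OrdConnected) (c : β) :
    {x ∈ s | c < f x}.OrdConnected :=
  ⟨fun _ hx _ hy _ hz =>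
    have hzs : _ ∈ s := hs.out hx.1 hy.1 hz
    ⟨hzs, hx.2.trans_le (hf hx.1 hzs hz.1)⟩⟩

theorem monotoneOn_iff_hasDerivAt_nonneg {D : Set ℝ} (hDo : IsOpen D) (hDc : Convex ℝ D)
    {f f' : ℝ → ℝ} (hf : ∀ x ∈ D, HasDerivAt f (f' x) x) :
    MonotoneOn f D ↔ ∀ x ∈ D, 0 ≤ f' x :=
  ⟨fun hmono x hx => (hf x hx).hasDerivWithinAt.nonneg_of_monotoneOn (hDo.preperfect x hx) hmono,
    fun hnonneg => monotoneOn_of_hasDerivWithinAt_nonneg hDc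
      (fun x hx => (hf x hx).continuousAt.continuousWithinAt)
      (fun x hx => (hf x (interior_subset hx)).hasDerivWithinAt)
      (fun x hx => hnonneg x (interior_subset hx))⟩

section TailExcess

variable {q : ℝ → ℝ} {m p : ℝ}

theorem expectedShortfall_sub (hp : p ≠ 1) :
    expectedShortfall q p - m = (1 - p)⁻¹ * tailExcess q m p := by
  have : 1 - p ≠ 0 := sub_ne_zero.2 hp.symm
  rw [expectedShortfall, tailExcess]
  field_simp

theorem thetaIndex_eq (hp : p ≠ 1) (hq : q p ≠ m) :
    thetaIndex q m p = tailExcess q m p / (q p - m) - (1 - p) := by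
  have : 1 - p ≠ 0 := sub_ne_zero.2 hp.symm
  have : q p - m ≠ 0 := sub_ne_zero.2 hq
  rw [thetaIndex, expectedShortfall, tailExcess]
  field_simp
  ring

theorem tailExcess_pos (hi : IntervalIntegrable q volume p 1) (hp : p < 1)
    (hmono : MonotoneOn q (Ico p 1)) (hq : m < q p) : 0 < tailExcess q m p := by
  have hpos : 0 < ∫ u in p..1, (q u - m) := by
    refine intervalIntegral.intervalIntegral_pos_of_pos_on (hi.sub intervalIntegrable_const)
      (fun x hx => ?_) hp
    have : q p ≤ q x := hmono (left_mem_Ico.2 hp) (Ioo_subset_Ico_self hx) hx.1.le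
    linarith
  rwa [intervalIntegral.integral_sub hi intervalIntegrable_const,
    intervalIntegral.integral_const, smul_eq_mul] at hpos

theorem hasDerivAt_tailExcess {s : Set ℝ} (hs : IsOpen s) (hc : ContinuousOn q s) (hp : p ∈ s)
    (hi : IntervalIntegrable q volume p 1) : HasDerivAt (tailExcess q m) (m - q p) p := by
  have hI : HasDerivAt (fun x => ∫ u in x..1, q u) (-q p) p :=
    intervalIntegral.integral_hasDerivAt_left hi (hc.stronglyMeasurableAtFilter hs p hp)
      (hc.continuousAt (hs.mem_nhds hp))
  exact (hI.sub (((hasDerivAt_id p).const_sub 1).mul_const m)).congr_deriv (by ring)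

end TailExcess

theorem hasDerivAt_tailExcess_div {qX qY : ℝ → ℝ} {mX mY p : ℝ} {s : Set ℝ} (hs : IsOpen s)
    (hXc : ContinuousOn qX s) (hYc : ContinuousOn qY s) (hp : p ∈ s)
    (hXi : IntervalIntegrable qX volume p 1) (hYi : IntervalIntegrable qY volume p 1)
    (hX : tailExcess qX mX p ≠ 0) :
    HasDerivAt (fun x => tailExcess qY mY x / tailExcess qX mX x)
      (((qX p - mX) * tailExcess qY mY p - (qY p - mY) * tailExcess qX mX p) /
        tailExcess qX mX p ^ 2) p :=
  ((hasDerivAt_tailExcess hs hYc hp hYi).div (hasDerivAt_tailExcess hs hXc hp hXi)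
    hX).congr_deriv (by ring)

theorem thetaIndex_le_thetaIndex_iff {qX qY : ℝ → ℝ} {mX mY p : ℝ} (hp : p ≠ 1)
    (hX : mX < qX p) (hY : mY < qY p) :
    thetaIndex qX mX p ≤ thetaIndex qY mY p ↔
      (qY p - mY) * tailExcess qX mX p ≤ (qX p - mX) * tailExcess qY mY p := by
  rw [thetaIndex_eq hp hX.ne', thetaIndex_eq hp hY.ne', sub_le_sub_iff_right,
    div_le_div_iff₀ (sub_pos.2 hX) (sub_pos.2 hY), mul_comm, mul_comm (tailExcess qY mY p)]

theorem theta_order_iff_right_spread_ratio_monotone_general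
    (qX qY : ℝ → ℝ)
    (hXc : ContinuousOn qX (Set.Ioo 0 1)) (hXm : StrictMonoOn qX (Set.Ioo 0 1))
    (hXi : IntervalIntegrable qX volume 0 1)
    (hYc : ContinuousOn qY (Set.Ioo 0 1)) (hYm : StrictMonoOn qY (Set.Ioo 0 1))
    (hYi : IntervalIntegrable qY volume 0 1)
    (mX mY : ℝ)
    (ESX ESY : ℝ → ℝ)
    (hESX : ∀ p ∈ Set.Ioo (0:ℝ) 1, ESX p = (1 - p)⁻¹ * ∫ u in p..1, qX u)
    (hESY : ∀ p ∈ Set.Ioo (0:ℝ) 1, ESY p = (1 - p)⁻¹ * ∫ u in p..1, qY u)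
    (θX θY : ℝ → ℝ)
    (hθX : ∀ p ∈ Set.Ioo (0:ℝ) 1, mX < qX p →
      θX p = (1 - p) * (ESX p - qX p) / (qX p - mX))
    (hθY : ∀ p ∈ Set.Ioo (0:ℝ) 1, mY < qY p →
      θY p = (1 - p) * (ESY p - qY p) / (qY p - mY))
    (D : Set ℝ) (hD : D = {p ∈ Set.Ioo (0:ℝ) 1 | mX < qX p ∧ mY < qY p}) :
    (∀ p ∈ D, θX p ≤ θY p) ↔
      MonotoneOn (fun p => (ESY p - mY) / (ESX p - mX)) D := by
  subst hD
  set D := {p ∈ Ioo (0:ℝ) 1 | mX < qX p ∧ mY < qY p}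
  have hD : D = {p ∈ Ioo 0 1 | mX < qX p} ∩ {p ∈ Ioo 0 1 | mY < qY p} := by
    ext p; simp only [D, mem_inter_iff, mem_ofPred_eq]; tauto
  have hDo : IsOpen D := hD ▸
    (hXc.isOpen_inter_preimage isOpen_Ioo isOpen_Ioi).inter
      (hYc.isOpen_inter_preimage isOpen_Ioo isOpen_Ioi)
  have hDc : Convex ℝ D :=
    convex_iff_ordConnected.2 <| hD ▸
      (hXm.monotoneOn.ordConnected_sep_lt ordConnected_Ioo mX).inter
        (hYm.monotoneOn.ordConnected_sep_lt ordConnected_Ioo mY)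
  have hint : ∀ {q : ℝ → ℝ}, IntervalIntegrable q volume 0 1 → ∀ p ∈ Ioo (0:ℝ) 1,
      IntervalIntegrable q volume p 1 := fun hi p hp =>
    hi.mono_set (uIcc_subset_uIcc (mem_uIcc_of_le hp.1.le hp.2.le) right_mem_uIcc)
  have hTX : ∀ p ∈ Ioo (0:ℝ) 1, mX < qX p → 0 < tailExcess qX mX p := fun p hp hpX =>
    tailExcess_pos (hint hXi p hp) hp.2 (hXm.monotoneOn.mono (Ico_subset_Ioo_left hp.1)) hpX
  have hratio : EqOn (fun p => (ESY p - mY) / (ESX p - mX))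
      (fun p => tailExcess qY mY p / tailExcess qX mX p) D := fun p hp => by
    have hp1 : p ≠ 1 := hp.1.2.ne
    dsimp only
    rw [show ESX p = expectedShortfall qX p from hESX p hp.1,
      show ESY p = expectedShortfall qY p from hESY p hp.1,
      expectedShortfall_sub hp1, expectedShortfall_sub hp1,
      mul_div_mul_left _ _ (inv_ne_zero (sub_ne_zero.2 hp1.symm))]
  rw [hratio.congr_monotoneOn, monotoneOn_iff_hasDerivAt_nonneg hDo hDc fun p hp =>
    hasDerivAt_tailExcess_div isOpen_Ioo hXc hYc hp.1 (hint hXi p hp.1) (hint hYi p hp.1)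
      (hTX p hp.1 hp.2.1).ne']
  refine forall₂_congr fun p ⟨hp01, hpX, hpY⟩ => ?_
  rw [hθX p hp01 hpX, hθY p hp01 hpY, hESX p hp01, hESY p hp01,
    le_div_iff₀ (pow_pos (hTX p hp01 hpX) 2), zero_mul, sub_nonneg]
  exact thetaIndex_le_thetaIndex_iff hp01.2.ne hpX hpY

/-- For two continuous, strictly increasing, integrable quantile functions
`qX, qY` with means `mX, mY`, Expected Shortfalls `ESX, ESY` and θ-indices `θX, θY`,
on the common domain `D = {p ∈ (0,1) : qX p > mX ∧ qY p > mY}` one has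
`θX ≤ θY` pointwise iff the right-spread ratio `p ↦ (ESY p - mY)/(ESX p - mX)`
is monotone nondecreasing on `D`. -/
theorem theta_order_iff_right_spread_ratio_monotone
    (qX qY : ℝ → ℝ)
    (hXc : ContinuousOn qX (Set.Ioo 0 1)) (hXm : StrictMonoOn qX (Set.Ioo 0 1))
    (hXi : IntervalIntegrable qX volume 0 1)
    (hYc : ContinuousOn qY (Set.Ioo 0 1)) (hYm : StrictMonoOn qY (Set.Ioo 0 1))
    (hYi : IntervalIntegrable qY volume 0 1)
    (mX mY : ℝ) (hmX : mX = ∫ u in (0:ℝ)..1, qX u) (hmY : mY = ∫ u in (0:ℝ)..1, qY u)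
    (ESX ESY : ℝ → ℝ)
    (hESX : ∀ p ∈ Set.Ioo (0:ℝ) 1, ESX p = (1 - p)⁻¹ * ∫ u in p..1, qX u)
    (hESY : ∀ p ∈ Set.Ioo (0:ℝ) 1, ESY p = (1 - p)⁻¹ * ∫ u in p..1, qY u)
    (θX θY : ℝ → ℝ)
    (hθX : ∀ p ∈ Set.Ioo (0:ℝ) 1, mX < qX p →
      θX p = (1 - p) * (ESX p - qX p) / (qX p - mX))
    (hθY : ∀ p ∈ Set.Ioo (0:ℝ) 1, mY < qY p →
      θY p = (1 - p) * (ESY p - qY p) / (qY p - mY))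
    (D : Set ℝ) (hD : D = {p ∈ Set.Ioo (0:ℝ) 1 | mX < qX p ∧ mY < qY p}) :
    (∀ p ∈ D, θX p ≤ θY p) ↔
      MonotoneOn (fun p => (ESY p - mY) / (ESX p - mX)) D :=
  theta_order_iff_right_spread_ratio_monotone_general qX qY hXc hXm hXi hYc hYm hYi mX mY ESX ESY
    hESX hESY θX θY hθX hθY D hD
end

section
/- Fix p ∈ (0,1). Let E, V, S : ℝ → ℝ be differentiable at 0 with E(0) = m, E'(0) = m_j, V(0) = v, V'(0) = v_j, S(0) = s, S'(0) = e_j, where v > m and s > v. Define θ(h) = (1−p)·(S(h) − V(h))/(V(h) − E(h)) and G(h) = ((1−p)·S(h) + θ(h)·E(h))/(1 − p + θ(h)). Then G is differentiable at 0 with derivative G'(0) = ((1−p)·e_j + θ(0)·m_j)/(1−p+θ(0)) − θ'(0)·(G(0) − m)/(1−p+θ(0)), where θ'(0) = θ(0)·[(e_j − v_j)/(s − v) − (v_j − m_j)/(v − m)]. -/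
/-!
Euler's allocation for PELVaR is the chain rule applied to two quotients. The flexibility level
`θ = (1-p)(S - V)/(V - E)` is a ratio of two quantities that are nonzero at `h = 0`, so its
derivative is `θ` times the difference of the logarithmic derivatives of numerator and denominator.
PELVaR itself is the weighted average of `S` and `E` with the fixed weight `1 - p` and the moving
weight `θ`; differentiating such an average gives the average of the derivatives plus a correction
proportional to `θ'` and to the distance of the average from `E`.
-/

variable {𝕜 : Type*} [NontriviallyNormedField 𝕜] {f g t : 𝕜 → 𝕜} {f' g' t' x : 𝕜}

theorem HasDerivAt.div_logDeriv (hf : HasDerivAt f f' x) (hg : HasDerivAt g g' x)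
    (hfx : f x ≠ 0) (hgx : g x ≠ 0) :
    HasDerivAt (fun y => f y / g y) (f x / g x * (f' / f x - g' / g x)) x :=
  (hf.div hg hgx).congr_deriv (by field_simp)

theorem HasDerivAt.weighted_average (a : 𝕜) (hf : HasDerivAt f f' x) (hg : HasDerivAt g g' x)
    (ht : HasDerivAt t t' x) (hx : a + t x ≠ 0) :
    HasDerivAt (fun y => (a * f y + t y * g y) / (a + t y))
      ((a * f' + t x * g') / (a + t x)
        - t' * ((a * f x + t x * g x) / (a + t x) - g x) / (a + t x)) x :=
  (((hf.const_mul a).add (ht.mul hg)).div (ht.const_add a) hx).congr_deriv <| by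
    simp only [Pi.add_apply, Pi.mul_apply]
    field_simp
    ring

/-- Fix `p ∈ (0,1)`. With `E, V, S` differentiable at `0`
(values `m, v, s`, derivatives `mj, vj, ej`, `v > m`, `s > v`), the PELVaR functional
`G h = ((1-p)·S h + T h·E h)/(1 - p + T h)` built from the θ-index
`T h = (1-p)·(S h - V h)/(V h - E h)` is differentiable at `0` with derivative
`((1-p)·ej + T 0·mj)/(1-p+T 0) - T'·(G 0 - m)/(1-p+T 0)`, where
`T' = T 0·[(ej - vj)/(s - v) - (vj - mj)/(v - m)]`. -/
theorem pelvar_euler_allocation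
    (p : ℝ) (hp : p ∈ Set.Ioo (0:ℝ) 1)
    (E V S : ℝ → ℝ) (m v s mj vj ej : ℝ)
    (hE : HasDerivAt E mj 0) (hV : HasDerivAt V vj 0) (hS : HasDerivAt S ej 0)
    (hE0 : E 0 = m) (hV0 : V 0 = v) (hS0 : S 0 = s)
    (hvm : m < v) (hsv : v < s)
    (T : ℝ → ℝ) (hT : ∀ h, T h = (1 - p) * (S h - V h) / (V h - E h))
    (G : ℝ → ℝ) (hG : ∀ h, G h = ((1 - p) * S h + T h * E h) / (1 - p + T h))
    (T' : ℝ) (hT' : T' = T 0 * ((ej - vj) / (s - v) - (vj - mj) / (v - m))) :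
    HasDerivAt G
      (((1 - p) * ej + T 0 * mj) / (1 - p + T 0)
        - T' * (G 0 - m) / (1 - p + T 0)) 0 := by
  subst hE0 hV0 hS0 hT'
  have hθ : HasDerivAt T (T 0 * ((ej - vj) / (S 0 - V 0) - (vj - mj) / (V 0 - E 0))) 0 := by
    have := ((hS.sub hV).div_logDeriv (hV.sub hE) (sub_ne_zero.2 hsv.ne')
      (sub_ne_zero.2 hvm.ne')).const_mul (1 - p)
    rw [funext hT]
    simpa only [Pi.sub_apply, mul_div_assoc, mul_assoc] using this
  have hθ0 : 0 < T 0 := by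
    rw [hT]
    exact div_pos (mul_pos (by linarith [hp.2]) (by linarith)) (by linarith)
  rw [funext hG]
  exact hS.weighted_average (1 - p) hE hθ (by linarith [hp.2])
end

section
/- Let α > 1 and κ > 0 and let X be Pareto II (Lomax) distributed, i.e. with cumulative distribution function F(x) = 1 − (κ/(κ+x))^α for x ≥ 0. Then E[X] = κ/(α−1), D_X = {p ∈ (0,1) : p > 1 − ((α−1)/α)^α}, and for every p ∈ D_X the θ-index is θ_p(X) = (1−p)/((α−1) − α·(1−p)^{1/α}). -/
/-!
On `(0, 1)` the Lomax quantile is `VaR_p = κ((1 - p)^(-1/α) - 1)`. Writing `s = (1 - p)^(1/α)`,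
integrating the quantile gives `ES_p - VaR_p = κ / ((α - 1) s)`, while
`VaR_p - E[X] = κ((α - 1) - α s) / ((α - 1) s)`; the sign of the latter describes `D_X` and the
quotient is the θ-index. The mean comes from the layer-cake formula
`E[X] = ∫₀^∞ P(X > t) dt = ∫₀^∞ (κ / (κ + t))^α dt`.
-/

open MeasureTheory Set

noncomputable section

def lomaxCDF (α κ x : ℝ) : ℝ := if 0 ≤ x then 1 - (κ / (κ + x)) ^ α else 0

def lomaxQuantile (α κ p : ℝ) : ℝ := κ * ((1 - p) ^ (-α⁻¹) - 1)

end

section Quantile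

variable {α κ p : ℝ}

lemma lomaxQuantile_eq_inv_rpow (hp : p < 1) :
    lomaxQuantile α κ p = κ * (((1 - p) ^ (1 / α))⁻¹ - 1) := by
  rw [lomaxQuantile, Real.rpow_neg (by linarith), one_div]

lemma setOf_le_lomaxCDF (hα : 0 < α) (hκ : 0 < κ) (hp : p ∈ Ioo (0 : ℝ) 1) :
    {x | p ≤ lomaxCDF α κ x} = Ici (lomaxQuantile α κ p) := by
  obtain ⟨hp0, hp1⟩ := hp
  have hq : 0 < 1 - p := by linarith
  set s := (1 - p) ^ (1 / α) with hs
  have hs0 : 0 < s := Real.rpow_pos_of_pos hq _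
  have hs1 : s < 1 := Real.rpow_lt_one hq.le (by linarith) (by positivity)
  have hquant : lomaxQuantile α κ p = κ / s - κ := by
    rw [lomaxQuantile_eq_inv_rpow hp1, ← hs]; ring
  have hquant_pos : 0 < κ / s - κ := by
    rw [sub_pos, lt_div_iff₀ hs0]; nlinarith
  ext x
  rw [mem_ofPred_eq, mem_Ici, hquant, lomaxCDF]
  split_ifs with hx
  · have hκx : 0 < κ + x := by linarith
    -- `p ≤ 1 - t ^ α ↔ t ≤ (1 - p) ^ (1 / α)`, then clear denominators
    rw [← sub_le_sub_iff_left 1, sub_sub_cancel,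
      ← Real.le_rpow_inv_iff_of_pos (by positivity) hq.le hα, ← one_div, ← hs,
      div_le_iff₀ hκx, sub_le_iff_le_add, div_le_iff₀ hs0]
    constructor <;> intro h <;> nlinarith
  · constructor <;> intro h <;> linarith

lemma lomaxQuantile_sub_div (hα : 1 < α) (hp : p < 1) :
    lomaxQuantile α κ p - κ / (α - 1) =
      κ * ((α - 1) - α * (1 - p) ^ (1 / α)) / ((α - 1) * (1 - p) ^ (1 / α)) := by
  have hs0 : 0 < (1 - p) ^ (1 / α) := Real.rpow_pos_of_pos (by linarith) _
  have hα1 : α - 1 ≠ 0 := by linarith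
  rw [lomaxQuantile_eq_inv_rpow hp]
  field_simp
  ring

lemma mul_rpow_one_div_lt_sub_one_iff (hα : 1 < α) (hp : p < 1) :
    α * (1 - p) ^ (1 / α) < α - 1 ↔ 1 - ((α - 1) / α) ^ α < p := by
  have hα0 : 0 < α := by linarith
  have hq : 0 < 1 - p := by linarith
  rw [← lt_div_iff₀' hα0, ← Real.rpow_lt_rpow_iff (by positivity) (by positivity) hα0,
    ← Real.rpow_mul hq.le, one_div_mul_cancel hα0.ne', Real.rpow_one]
  constructor <;> intro h <;> linarith

lemma div_lt_lomaxQuantile_iff (hα : 1 < α) (hκ : 0 < κ) (hp : p < 1) :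
    κ / (α - 1) < lomaxQuantile α κ p ↔ 1 - ((α - 1) / α) ^ α < p := by
  have hs0 : 0 < (1 - p) ^ (1 / α) := Real.rpow_pos_of_pos (by linarith) _
  have hα1 : 0 < α - 1 := by linarith
  rw [← sub_pos, lomaxQuantile_sub_div hα hp, ← mul_rpow_one_div_lt_sub_one_iff hα hp,
    div_pos_iff_of_pos_right (by positivity), mul_pos_iff_of_pos_left hκ, sub_pos]

lemma intervalIntegral_lomaxQuantile (hα : 1 < α) :
    ∫ u in p..1, lomaxQuantile α κ u =
      κ * ((1 - p) ^ (1 - α⁻¹) * (α / (α - 1)) - (1 - p)) := by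
  have hexp : (-1 : ℝ) < -α⁻¹ := by
    rw [neg_lt_neg_iff]; exact inv_lt_one_of_one_lt₀ hα
  have hint : IntervalIntegrable (fun u => (1 - u) ^ (-α⁻¹)) volume p 1 := by
    simpa using
      (intervalIntegral.intervalIntegrable_rpow' hexp (a := 1 - p) (b := 0)).comp_sub_left 1
  have hpow : ∫ u in p..1, (1 - u) ^ (-α⁻¹) = (1 - p) ^ (1 - α⁻¹) * (α / (α - 1)) := by
    rw [intervalIntegral.integral_comp_sub_left (fun x => x ^ (-α⁻¹)), sub_self,
      integral_rpow (Or.inl hexp), Real.zero_rpow (by linarith), sub_zero, neg_add_eq_sub]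
    field_simp
  simp only [lomaxQuantile]
  rw [intervalIntegral.integral_const_mul,
    intervalIntegral.integral_sub hint intervalIntegrable_const,
    intervalIntegral.integral_const, smul_eq_mul, mul_one, hpow]

lemma lomaxES_sub_lomaxQuantile (hα : 1 < α) (hp : p < 1) :
    (1 - p)⁻¹ * (∫ u in p..1, lomaxQuantile α κ u) - lomaxQuantile α κ p =
      κ / ((α - 1) * (1 - p) ^ (1 / α)) := by
  have hq : 0 < 1 - p := by linarith
  have hs0 : 0 < (1 - p) ^ (1 / α) := Real.rpow_pos_of_pos hq _
  have hα1 : α - 1 ≠ 0 := by linarith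
  rw [intervalIntegral_lomaxQuantile hα, lomaxQuantile_eq_inv_rpow hp, Real.rpow_sub hq,
    Real.rpow_one, ← one_div]
  field_simp
  ring

end Quantile

lemma ae_nonneg_of_measure_le_eq_zero {Ω : Type*} [MeasurableSpace Ω] {μ : Measure Ω}
    {X : Ω → ℝ} (h : ∀ x < 0, μ {ω | X ω ≤ x} = 0) : 0 ≤ᵐ[μ] X := by
  have hsub : {ω | X ω < 0} ⊆ ⋃ n : ℕ, {ω | X ω ≤ -1 / (n + 1)} := by
    intro ω hω
    obtain ⟨n, hn⟩ := exists_nat_one_div_lt (neg_pos.mpr (show X ω < 0 from hω))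
    exact mem_iUnion.mpr ⟨n, by rw [mem_ofPred_eq, neg_div]; linarith⟩
  have hnull : μ {ω | X ω < 0} = 0 :=
    measure_mono_null hsub <| measure_iUnion_null fun n => h _ <| by
      rw [neg_div, neg_lt_zero]; positivity
  simpa [Filter.EventuallyLE, ae_iff] using hnull

lemma integral_Ioi_zero_add_rpow_of_lt {a c : ℝ} (ha : a < -1) (hc : 0 < c) :
    ∫ t in Ioi (0 : ℝ), (c + t) ^ a = -c ^ (a + 1) / (a + 1) := by
  have hpre : Ioi (0 : ℝ) = (· + c) ⁻¹' Ioi c := by ext t; simp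
  rw [← integral_Ioi_rpow_of_lt ha hc, hpre,
    ← (measurePreserving_add_right volume c).setIntegral_preimage_emb
      (MeasurableEquiv.addRight c).measurableEmbedding (· ^ a) (Ioi c)]
  simp_rw [add_comm c]

lemma integral_eq_of_measureReal_le_eq_lomaxCDF {Ω : Type*} [MeasurableSpace Ω] {μ : Measure Ω}
    [IsProbabilityMeasure μ] {X : Ω → ℝ} (hX : Integrable X μ) {α κ : ℝ} (hα : 1 < α)
    (hκ : 0 < κ) (hF : ∀ x, μ.real {ω | X ω ≤ x} = lomaxCDF α κ x) :
    ∫ ω, X ω ∂μ = κ / (α - 1) := by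
  have hXnn : 0 ≤ᵐ[μ] X := ae_nonneg_of_measure_le_eq_zero fun x hx => by
    have := hF x
    rwa [lomaxCDF, if_neg hx.not_ge, measureReal_eq_zero_iff] at this
  have htail :
      EqOn (fun t => μ.real {ω | t < X ω}) (fun t => κ ^ α * (κ + t) ^ (-α)) (Ioi 0) := by
    intro t (ht : 0 < t)
    have hκt : 0 < κ + t := by linarith
    have hcompl : {ω | t < X ω} = {ω | X ω ≤ t}ᶜ := by ext; simp
    dsimp only
    rw [hcompl,
      probReal_compl_eq_one_sub₀ (nullMeasurableSet_le hX.aemeasurable aemeasurable_const), hF,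
      lomaxCDF, if_pos ht.le, Real.div_rpow hκ.le hκt.le, Real.rpow_neg hκt.le]
    ring
  rw [hX.integral_eq_integral_meas_lt hXnn, setIntegral_congr_fun measurableSet_Ioi htail,
    integral_const_mul, integral_Ioi_zero_add_rpow_of_lt (by linarith) hκ, neg_div, ← div_neg,
    neg_add_eq_sub, neg_sub, mul_div_assoc', ← Real.rpow_add hκ]
  norm_num

/-- Let `X` be Pareto II (Lomax) distributed with shape `α > 1` and
scale `κ > 0`, i.e. with CDF `F x = 1 - (κ/(κ+x))^α` for `x ≥ 0` (and `F x = 0`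
for `x < 0`). Then `E[X] = κ/(α-1)`,
`D_X = {p ∈ (0,1) : VaR_p(X) > E[X]} = {p ∈ (0,1) : p > 1 - ((α-1)/α)^α}`, and for
every `p ∈ D_X` the θ-index is `θ_p(X) = (1-p)/((α-1) - α·(1-p)^{1/α})`. -/
theorem lomax_theta_index
    {Ω : Type*} [MeasurableSpace Ω] (μ : Measure Ω) [IsProbabilityMeasure μ]
    (X : Ω → ℝ) (hX : Integrable X μ)
    (α κ : ℝ) (hα : 1 < α) (hκ : 0 < κ)
    (F : ℝ → ℝ) (hF : ∀ x, F x = (μ {ω | X ω ≤ x}).toReal)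
    (hFlomax : ∀ x : ℝ, F x = if 0 ≤ x then 1 - (κ / (κ + x)) ^ α else 0)
    (VaR : ℝ → ℝ) (hVaR : ∀ p, VaR p = sInf {x | p ≤ F x})
    (ES : ℝ → ℝ) (hES : ∀ p ∈ Set.Ioo (0:ℝ) 1, ES p = (1 - p)⁻¹ * ∫ u in p..1, VaR u) :
    (∫ ω, X ω ∂μ) = κ / (α - 1)
    ∧ {p ∈ Set.Ioo (0:ℝ) 1 | (∫ ω, X ω ∂μ) < VaR p}
        = {p ∈ Set.Ioo (0:ℝ) 1 | 1 - ((α - 1) / α) ^ α < p}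
    ∧ ∀ p ∈ Set.Ioo (0:ℝ) 1, 1 - ((α - 1) / α) ^ α < p →
        (1 - p) * (ES p - VaR p) / (VaR p - ∫ ω, X ω ∂μ)
          = (1 - p) / ((α - 1) - α * (1 - p) ^ (1 / α)) := by
  obtain rfl : F = lomaxCDF α κ := funext hFlomax
  have hmean : ∫ ω, X ω ∂μ = κ / (α - 1) :=
    integral_eq_of_measureReal_le_eq_lomaxCDF hX hα hκ fun x => (hF x).symm
  have hVaR' : ∀ p ∈ Ioo (0 : ℝ) 1, VaR p = lomaxQuantile α κ p := fun p hp => by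
    rw [hVaR, setOf_le_lomaxCDF (by linarith) hκ hp, csInf_Ici]
  have hES' : ∀ p ∈ Ioo (0 : ℝ) 1,
      ES p = (1 - p)⁻¹ * ∫ u in p..1, lomaxQuantile α κ u := fun p hp => by
    rw [hES p hp, intervalIntegral.integral_congr_Ioo_of_le hp.2.le
      fun u hu => hVaR' u ⟨hp.1.trans hu.1, hu.2⟩]
  refine ⟨hmean, ?_, fun p hp hpD => ?_⟩
  · ext p
    refine and_congr_right fun hp => ?_
    rw [hmean, hVaR' p hp, div_lt_lomaxQuantile_iff hα hκ hp.2]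
  · have hα1 : α - 1 ≠ 0 := by linarith
    have hs0 : 0 < (1 - p) ^ (1 / α) := Real.rpow_pos_of_pos (by linarith [hp.2]) _
    have hden : 0 < (α - 1) - α * (1 - p) ^ (1 / α) :=
      sub_pos.mpr ((mul_rpow_one_div_lt_sub_one_iff hα hp.2).mpr hpD)
    rw [hES' p hp, hVaR' p hp, hmean, lomaxES_sub_lomaxQuantile hα hp.2,
      lomaxQuantile_sub_div hα hp.2]
    field_simp
end
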